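/- arXiv:2501.06796 — 7 statements merged into one kernel-verified Lean document; each statement's English description precedes it below -/
import Mathlib

section
/- Suppose there exist times t₊, t₋ ∈ ℝ such that α_{t₊}(ξ(x₀)) > 0, α_{t₋}(ξ(x₀)) < 0, and σ_{t₊} ≤ σ_{t₋}. Then x₀ does not lie on any invariant torus of B transverse to ξ; that is, there is no map f defining an invariant torus of B transverse to ξ with x₀ in the range of f. -/
open Matrix

/-- The determinant of the 3×3 matrix with columns `a`, `b`, `c`. -/
noncomputable def det3 (a b c : Fin 3 → ℝ) : ℝ :=
  ((Matrix.of ![a, b, c])ᵀ).det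

/-- `f : ℝ² → ℝ³` defines an invariant torus of the vector field `B` transverse to the
direction field `ξ`: it is C¹, doubly periodic with period 1, injective on a fundamental
domain, an immersion, `B` is everywhere tangent to it and `ξ` is everywhere transverse. -/
def IsInvariantTorusTransverse (B ξ : (Fin 3 → ℝ) → (Fin 3 → ℝ))
    (f : ℝ × ℝ → Fin 3 → ℝ) : Prop :=
  ContDiff ℝ 1 f ∧
  (∀ u v : ℝ, f (u + 1, v) = f (u, v) ∧ f (u, v + 1) = f (u, v)) ∧
  Set.InjOn f (Set.Ico (0:ℝ) 1 ×ˢ Set.Ico (0:ℝ) 1) ∧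
  (∀ p : ℝ × ℝ, LinearIndependent ℝ ![fderiv ℝ f p (1, 0), fderiv ℝ f p (0, 1)]) ∧
  (∀ p : ℝ × ℝ,
    B (f p) ∈ Submodule.span ℝ {fderiv ℝ f p (1, 0), fderiv ℝ f p (0, 1)}) ∧
  (∀ p : ℝ × ℝ,
    ξ (f p) ∉ Submodule.span ℝ {fderiv ℝ f p (1, 0), fderiv ℝ f p (0, 1)})

open Set Metric Filter

lemma det3_expand (a b c : Fin 3 → ℝ) :
    det3 a b c = a 0 * b 1 * c 2 - a 0 * b 2 * c 1 - a 1 * b 0 * c 2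
      + a 1 * b 2 * c 0 + a 2 * b 0 * c 1 - a 2 * b 1 * c 0 := by
  simp [det3, Matrix.det_fin_three, Matrix.transpose, Matrix.vecHead, Matrix.vecTail]
  ring

lemma det3_zero_combo {a b c : Fin 3 → ℝ} (h : det3 a b c = 0) :
    ∃ v : Fin 3 → ℝ, v ≠ 0 ∧ v 0 • a + v 1 • b + v 2 • c = 0 := by
  obtain ⟨v, hv0, hv⟩ := (Matrix.exists_mulVec_eq_zero_iff).2 h
  refine ⟨v, hv0, ?_⟩
  funext i
  have := congrFun hv i
  simp [Matrix.mulVec, dotProduct, Fin.sum_univ_three] at this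
  fin_cases i <;> simpa [mul_comm] using this


open Set Metric Filter

/-- Master lemma: if every point of a compact set `K` admits a curve inside `K`
with velocity `V y`, and `ζ` is an `ε`-approximate trajectory of `V`, then the
distance from `ζ t` to `K` satisfies a Grönwall bound. -/
lemma approx_gronwall {E : Type*} [NormedAddCommGroup E] [NormedSpace ℝ E]
    {K : Set E} (hKne : K.Nonempty) (hKc : IsCompact K)
    {V : E → E} {L : NNReal} {C : Set E} (hVC : LipschitzOnWith L V C) (hKC : K ⊆ C)
    (htan : ∀ y ∈ K, ∃ c : ℝ → E, (∀ h, c h ∈ K) ∧ c 0 = y ∧ HasDerivAt c (V y) 0)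
    {a b ε : ℝ} {ζ ζ' : ℝ → E} (hζ : ∀ t ∈ Icc a b, HasDerivAt ζ (ζ' t) t)
    (hζC : ∀ t ∈ Icc a b, ζ t ∈ C)
    (hdef : ∀ t ∈ Icc a b, ‖ζ' t - V (ζ t)‖ ≤ ε) :
    ∀ t ∈ Icc a b, infDist (ζ t) K ≤ gronwallBound (infDist (ζ a) K) L ε (t - a) := by
  apply le_gronwallBound_of_liminf_deriv_right_le
    (f' := fun t => (L : ℝ) * infDist (ζ t) K + ε)
  · exact (continuous_infDist_pt K).comp_continuousOn
      (fun t ht => (hζ t ht).continuousAt.continuousWithinAt)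
  · intro t ht r hr
    obtain ⟨y, hyK, hy⟩ := hKc.exists_infDist_eq_dist hKne (ζ t)
    obtain ⟨c, hcK, hc0, hcd⟩ := htan y hyK
    set g : ℝ → E := fun z => ζ z - c (z - t) with hg
    have h1 : HasDerivAt (fun z : ℝ => z - t) 1 t := (hasDerivAt_id t).sub_const t
    have h2 : HasDerivAt (fun z => c (z - t)) ((1:ℝ) • V y) t := by
      apply HasDerivAt.scomp (g₁ := c) t ?_ h1
      rw [sub_self]; exact hcd
    have hgd : HasDerivAt g (ζ' t - V y) t := by
      have h3 := (hζ t (Ico_subset_Icc_self ht)).sub h2; rw [one_smul] at h3; exact h3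
    have hnorm : ‖ζ' t - V y‖ < r := by
      have hle : ‖ζ' t - V y‖ ≤ ‖ζ' t - V (ζ t)‖ + ‖V (ζ t) - V y‖ := by
        have : ζ' t - V y = (ζ' t - V (ζ t)) + (V (ζ t) - V y) := by abel
        rw [this]; exact norm_add_le _ _
      have hlip : ‖V (ζ t) - V y‖ ≤ (L : ℝ) * infDist (ζ t) K := by
        rw [← dist_eq_norm, hy]
        exact hVC.dist_le_mul _ (hζC t (Ico_subset_Icc_self ht)) _ (hKC hyK)
      have := hdef t (Ico_subset_Icc_self ht)
      calc ‖ζ' t - V y‖ ≤ ε + (L : ℝ) * infDist (ζ t) K := by linarith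
        _ < r := by linarith
    have key := (hgd.hasDerivWithinAt (s := Ici t)).liminf_right_slope_norm_le hnorm
    refine key.mp (Filter.Eventually.mono self_mem_nhdsWithin fun z hz hlt => ?_)
    have hzt : (0:ℝ) < z - t := sub_pos.2 hz
    have hFz : infDist (ζ z) K ≤ ‖g z‖ := by
      rw [hg]; simpa [dist_eq_norm] using infDist_le_dist_of_mem (s := K)
        (x := ζ z) (hcK (z - t))
    have hFt : infDist (ζ t) K = ‖g t‖ := by
      rw [hg]; simp only [sub_self, hc0]
      rw [hy, dist_eq_norm]
    calc (z - t)⁻¹ * (infDist (ζ z) K - infDist (ζ t) K)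
        ≤ (z - t)⁻¹ * (‖g z‖ - ‖g t‖) := by
          apply mul_le_mul_of_nonneg_left _ (le_of_lt (inv_pos.2 hzt))
          rw [hFt]; linarith
      _ < r := hlt
  · exact le_refl _
  · exact fun t _ => le_refl _

open Set Metric Filter

/-- A `C¹` map is Lipschitz on every closed ball. -/
lemma lipschitzOnWith_closedBall_of_contDiff {E F : Type*}
    [NormedAddCommGroup E] [NormedSpace ℝ E] [FiniteDimensional ℝ E]
    [NormedAddCommGroup F] [NormedSpace ℝ F]
    {V : E → F} (hV : ContDiff ℝ 1 V) (x₀ : E) (R : ℝ) :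
    ∃ L : NNReal, LipschitzOnWith L V (closedBall x₀ R) := by
  obtain ⟨m, hm⟩ := (isCompact_closedBall x₀ R).exists_bound_of_continuousOn
    ((hV.continuous_fderiv one_ne_zero).continuousOn (s := closedBall x₀ R))
  refine ⟨(max m 0).toNNReal, Convex.lipschitzOnWith_of_nnnorm_fderiv_le
    (fun p _ => hV.differentiable one_ne_zero p) (fun p hp => ?_) (convex_closedBall x₀ R)⟩
  have h1 : ‖fderiv ℝ V p‖ ≤ ((max m 0).toNNReal : ℝ) := by
    rw [Real.coe_toNNReal _ (le_max_right m 0)]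
    exact le_trans (hm p hp) (le_max_left m 0)
  rwa [← NNReal.coe_le_coe, coe_nnnorm]

/-- Forward invariance of a compact set all of whose points admit internal curves
with velocity `V`. -/
lemma forward_invariance {E : Type*}
    [NormedAddCommGroup E] [NormedSpace ℝ E] [FiniteDimensional ℝ E]
    {K : Set E} (hKne : K.Nonempty) (hKc : IsCompact K)
    {V : E → E} (hV : ContDiff ℝ 1 V)
    (htan : ∀ y ∈ K, ∃ c : ℝ → E, (∀ h, c h ∈ K) ∧ c 0 = y ∧ HasDerivAt c (V y) 0)
    {x : ℝ → E} (hx : ∀ t, HasDerivAt x (V (x t)) t) (hx0 : x 0 ∈ K) :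
    ∀ t ∈ Icc (0:ℝ) T, x t ∈ K := by
  intro T' hT'
  have hxc : Continuous x := by
    rw [continuous_iff_continuousAt]; exact fun t => (hx t).continuousAt
  have hX : IsCompact (x '' Icc 0 T) := (isCompact_Icc).image hxc
  obtain ⟨R, hR⟩ := (isBounded_iff_subset_closedBall 0).1 (hKc.union hX).isBounded
  obtain ⟨L, hL⟩ := lipschitzOnWith_closedBall_of_contDiff hV (0:E) R
  have key := approx_gronwall hKne hKc hL
    (fun y hy => hR (Or.inl hy)) htan (a := 0) (b := T) (ε := 0)
    (ζ := x) (ζ' := fun t => V (x t)) (fun t _ => hx t)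
    (fun t ht => hR (Or.inr (mem_image_of_mem x ht)))
    (fun t _ => by simp)
  have h0 : infDist (x 0) K = 0 := infDist_zero_of_mem hx0
  have := key T' hT'
  rw [h0, gronwallBound_ε0_δ0] at this
  have hge : 0 ≤ infDist (x T') K := infDist_nonneg
  exact (hKc.isClosed.mem_iff_infDist_zero hKne).2 (le_antisymm this hge)
/-- Propagation of first-order tangency along an approximate linearized trajectory. -/
lemma tangent_propagation {E : Type*}
    [NormedAddCommGroup E] [NormedSpace ℝ E] [FiniteDimensional ℝ E]
    {K : Set E} (hKne : K.Nonempty) (hKc : IsCompact K)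
    {V : E → E} (hV : ContDiff ℝ 1 V)
    (htan : ∀ y ∈ K, ∃ c : ℝ → E, (∀ h, c h ∈ K) ∧ c 0 = y ∧ HasDerivAt c (V y) 0)
    {x u : ℝ → E} (hx : ∀ t, HasDerivAt x (V (x t)) t)
    (hu : ∀ t, HasDerivAt u (fderiv ℝ V (x t) (u t)) t)
    (hinv : ∀ t, x t ∈ K) {T : ℝ} (hT : 0 ≤ T)
    (hδ : Filter.Tendsto (fun s => infDist (x 0 + s • u 0) K / s) (nhdsWithin 0 (Ioi 0)) (nhds 0)) :
    Filter.Tendsto (fun s => infDist (x T + s • u T) K / s) (nhdsWithin 0 (Ioi 0)) (nhds 0) := by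
  have hxc : Continuous x := by
    rw [continuous_iff_continuousAt]; exact fun t => (hx t).continuousAt
  have huc : Continuous u := by
    rw [continuous_iff_continuousAt]; exact fun t => (hu t).continuousAt
  -- bound for `u` on `[0, T]`
  obtain ⟨Um', hUm'⟩ := (isCompact_Icc.image huc).exists_bound_of_continuousOn
    (continuousOn_id (s := u '' Icc 0 T))
  set Um : ℝ := max Um' 0 with hUmdef
  have hUm : ∀ t ∈ Icc (0:ℝ) T, ‖u t‖ ≤ Um :=
    fun t ht => le_trans (hUm' _ (mem_image_of_mem u ht)) (le_max_left _ _)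
  have hUm0 : 0 ≤ Um := le_max_right _ _
  -- radius containing K and the trajectory
  obtain ⟨R', hR'⟩ := (isBounded_iff_subset_closedBall 0).1
    (hKc.union (isCompact_Icc.image hxc)).isBounded
  set R : ℝ := max R' 0 with hRdef
  have hR : K ∪ x '' Icc 0 T ⊆ closedBall 0 R :=
    fun p hp => closedBall_subset_closedBall (le_max_left _ _) (hR' hp)
  have hR0 : 0 ≤ R := le_max_right _ _
  -- Lipschitz constant on the big ball
  obtain ⟨L', hL'⟩ := lipschitzOnWith_closedBall_of_contDiff hV (0:E) (R + Um + 1)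
  set L : NNReal := L' + 1 with hLdef
  have hL : LipschitzOnWith L V (closedBall 0 (R + Um + 1)) :=
    fun p hp q hq => le_trans (hL' hp hq)
      (mul_le_mul_left (ENNReal.coe_le_coe.2 (by simp [hLdef])) _)
  have hLpos : (0:ℝ) < (L:ℝ) := by
    have : (1:NNReal) ≤ L := by simp [hLdef]
    exact lt_of_lt_of_le zero_lt_one (by exact_mod_cast this)
  -- uniform continuity of the derivative on the big ball
  have hfdc : ContinuousOn (fderiv ℝ V) (closedBall 0 (R + Um + 1)) :=
    (hV.continuous_fderiv one_ne_zero).continuousOn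
  have hucont := (isCompact_closedBall (0:E) (R + Um + 1)).uniformContinuousOn_of_continuous hfdc
  rw [Metric.uniformContinuousOn_iff] at hucont
  set CT : ℝ := Real.exp ((L:ℝ) * T) with hCT
  have hCTpos : 0 < CT := Real.exp_pos _
  have hCT1 : 1 ≤ CT := Real.one_le_exp (by positivity)
  rw [NormedAddCommGroup.tendsto_nhds_zero] at hδ ⊢
  intro ε'' hε''
  -- choose the modulus `ε₁` for the derivative
  set ε₁ : ℝ := ε'' * (L:ℝ) / (2 * (Um + 1) * CT) with hε₁def
  have hε₁pos : 0 < ε₁ := by positivity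
  obtain ⟨δ₁, hδ₁pos, hδ₁⟩ := hucont ε₁ hε₁pos
  -- the eventual smallness of the initial data
  have hδev := hδ (ε'' / (2 * CT)) (by positivity)
  have hsmall : Ioc (0:ℝ) (min (min (δ₁ / (2 * (Um + 1))) 1) 1) ∈ nhdsWithin (0:ℝ) (Ioi 0) :=
    Ioc_mem_nhdsGT (by positivity)
  filter_upwards [hδev, hsmall] with s hs1 hs2
  obtain ⟨hs0, hsle⟩ := hs2
  have hs1' : s ≤ 1 := le_trans hsle (le_trans (min_le_right _ _) le_rfl)
  have hsδ : s * (Um + 1) ≤ δ₁ / 2 := by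
    have h5 : s ≤ δ₁ / (2 * (Um + 1)) :=
      le_trans hsle (le_trans (min_le_left _ _) (min_le_left _ _))
    have h6 : δ₁ / (2 * (Um + 1)) * (Um + 1) = δ₁ / 2 := by
      field_simp
    have h7 := mul_le_mul_of_nonneg_right h5 (by positivity : (0:ℝ) ≤ Um + 1)
    rw [h6] at h7
    exact h7
  -- the approximate trajectory
  set ζ : ℝ → E := fun t => x t + s • u t with hζdef
  set ζ' : ℝ → E := fun t => V (x t) + s • (fderiv ℝ V (x t)) (u t) with hζ'def
  have hζd : ∀ t ∈ Icc (0:ℝ) T, HasDerivAt ζ (ζ' t) t :=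
    fun t _ => ((hx t).add ((hu t).const_smul s))
  have hζC : ∀ t ∈ Icc (0:ℝ) T, ζ t ∈ closedBall 0 (R + Um + 1) := by
    intro t ht
    rw [mem_closedBall, dist_zero_right]
    have h1 : ‖x t‖ ≤ R := by
      have := hR (Or.inr (mem_image_of_mem x ht))
      rwa [mem_closedBall, dist_zero_right] at this
    have h2 : ‖s • u t‖ ≤ Um := by
      rw [norm_smul, Real.norm_eq_abs, abs_of_pos hs0]
      calc s * ‖u t‖ ≤ 1 * Um := by
            apply mul_le_mul hs1' (hUm t ht) (norm_nonneg _) zero_le_one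
        _ = Um := one_mul _
    calc ‖x t + s • u t‖ ≤ ‖x t‖ + ‖s • u t‖ := norm_add_le _ _
      _ ≤ R + Um + 1 := by linarith
  -- defect estimate
  have hdef : ∀ t ∈ Icc (0:ℝ) T, ‖ζ' t - V (ζ t)‖ ≤ ε₁ * (s * (Um + 1)) := by
    intro t ht
    have hwnorm : ‖s • u t‖ ≤ s * (Um + 1) := by
      rw [norm_smul, Real.norm_eq_abs, abs_of_pos hs0]
      apply mul_le_mul_of_nonneg_left _ (le_of_lt hs0)
      linarith [hUm t ht]
    have hwsmall : ‖s • u t‖ ≤ δ₁ / 2 := le_trans hwnorm hsδ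
    have hzR : ‖x t‖ ≤ R := by
      have := hR (Or.inr (mem_image_of_mem x ht))
      rwa [mem_closedBall, dist_zero_right] at this
    have hwUm1 : ‖s • u t‖ ≤ Um + 1 := by nlinarith [hUm t ht, hwnorm]
    have hballsub : closedBall (x t) ‖s • u t‖ ⊆ closedBall 0 (R + Um + 1) := by
      intro p hp
      rw [mem_closedBall, dist_zero_right]
      have h1 : dist p (x t) ≤ ‖s • u t‖ := hp
      calc ‖p‖ = ‖(p - x t) + x t‖ := by rw [sub_add_cancel]
        _ ≤ ‖p - x t‖ + ‖x t‖ := norm_add_le _ _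
        _ ≤ R + Um + 1 := by rw [← dist_eq_norm] at *; linarith
    have hbound : ∀ p ∈ closedBall (x t) ‖s • u t‖,
        ‖fderiv ℝ V p - fderiv ℝ V (x t)‖ ≤ ε₁ := by
      intro p hp
      have hpC : p ∈ closedBall 0 (R + Um + 1) := hballsub hp
      have hzC : x t ∈ closedBall 0 (R + Um + 1) := by
        rw [mem_closedBall, dist_zero_right]; linarith [hUm0]
      have hdist : dist p (x t) < δ₁ := lt_of_le_of_lt (le_trans hp hwsmall) (by linarith)
      have := hδ₁ p hpC (x t) hzC hdist
      rw [dist_eq_norm] at this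
      exact le_of_lt this
    have hmvt := Convex.norm_image_sub_le_of_norm_fderiv_le'
      (f := V) (φ := fderiv ℝ V (x t)) (s := closedBall (x t) ‖s • u t‖) (C := ε₁)
      (x := x t) (y := x t + s • u t)
      (fun p _ => hV.differentiable one_ne_zero p) hbound (convex_closedBall _ _)
      (mem_closedBall_self (norm_nonneg _))
      (by rw [mem_closedBall, dist_eq_norm, add_sub_cancel_left])
    have hlin : (fderiv ℝ V (x t)) (x t + s • u t - x t) = s • (fderiv ℝ V (x t)) (u t) := by
      rw [add_sub_cancel_left, ContinuousLinearMap.map_smul]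
    have heq : ζ' t - V (ζ t)
        = -(V (x t + s • u t) - V (x t) - (fderiv ℝ V (x t)) (x t + s • u t - x t)) := by
      show V (x t) + s • (fderiv ℝ V (x t)) (u t) - V (x t + s • u t) = _
      rw [hlin]; abel
    rw [heq, norm_neg]
    calc ‖V (x t + s • u t) - V (x t) - (fderiv ℝ V (x t)) (x t + s • u t - x t)‖
        ≤ ε₁ * ‖x t + s • u t - x t‖ := hmvt
      _ = ε₁ * ‖s • u t‖ := by rw [add_sub_cancel_left]
      _ ≤ ε₁ * (s * (Um + 1)) := mul_le_mul_of_nonneg_left hwnorm (le_of_lt hε₁pos)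
  -- apply the master lemma
  have key := approx_gronwall hKne hKc hL
    (fun y hy => closedBall_subset_closedBall (by linarith) (hR (Or.inl hy)))
    htan hζd hζC hdef T (right_mem_Icc.2 hT)
  have hgb : gronwallBound (infDist (ζ 0) K) L (ε₁ * (s * (Um + 1))) (T - 0)
      = infDist (ζ 0) K * CT + ε₁ * (s * (Um + 1)) / (L:ℝ) * (CT - 1) := by
    rw [gronwallBound_of_K_ne_0 (ne_of_gt hLpos), sub_zero, hCT]
  rw [hgb] at key
  have hδs : infDist (ζ 0) K / s < ε'' / (2 * CT) := by
    have := hs1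
    rw [Real.norm_eq_abs, abs_of_nonneg (div_nonneg infDist_nonneg (le_of_lt hs0))] at this
    exact this
  have hfinal : infDist (ζ T) K / s < ε'' := by
    rw [div_lt_iff₀ hs0]
    have hterm2 : ε₁ * (s * (Um + 1)) / (L:ℝ) * (CT - 1) ≤ ε'' * s / 2 := by
      rw [hε₁def]
      have h1 : ε'' * (L:ℝ) / (2 * (Um + 1) * CT) * (s * (Um + 1)) / (L:ℝ) * (CT - 1)
          = ε'' * s / 2 * ((CT - 1) / CT) := by
        field_simp
      rw [h1]
      have h2 : (CT - 1) / CT ≤ 1 := by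
        rw [div_le_one hCTpos]; linarith
      have h3 : 0 ≤ ε'' * s / 2 := by positivity
      nlinarith
    have hterm1 : infDist (ζ 0) K * CT < ε'' / (2 * CT) * s * CT := by
      apply mul_lt_mul_of_pos_right _ hCTpos
      rw [div_lt_iff₀ hs0] at hδs
      linarith
    have h4 : ε'' / (2 * CT) * s * CT = ε'' * s / 2 := by field_simp
    calc infDist (ζ T) K
        ≤ infDist (ζ 0) K * CT + ε₁ * (s * (Um + 1)) / (L:ℝ) * (CT - 1) := key
      _ < ε'' / (2 * CT) * s * CT + ε'' * s / 2 := by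
          exact add_lt_add_of_lt_of_le hterm1 hterm2
      _ = ε'' * s := by rw [h4]; ring
  rw [Real.norm_eq_abs, abs_of_nonneg (div_nonneg infDist_nonneg (le_of_lt hs0))]
  exact hfinal

section Torus

variable {f : ℝ × ℝ → Fin 3 → ℝ}

/-- Integer periodicity from period-1 periodicity. -/
lemma torus_periodic_int
    (hper : ∀ u v : ℝ, f (u + 1, v) = f (u, v) ∧ f (u, v + 1) = f (u, v)) :
    ∀ (p : ℝ × ℝ) (m n : ℤ), f (p.1 + m, p.2 + n) = f p := by
  have h1 : ∀ (u v : ℝ) (m : ℤ), f (u + m, v) = f (u, v) := by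
    intro u v m
    induction m using Int.induction_on with
    | zero => simp
    | succ k ih =>
      have := (hper (u + k) v).1
      push_cast
      push_cast at ih
      calc f (u + (k + 1), v) = f (u + k + 1, v) := by ring_nf
        _ = f (u + k, v) := by rw [show ((u + k + 1 : ℝ)) = (u + k) + 1 by ring] at this ⊢; exact this
        _ = f (u, v) := ih
    | pred k ih =>
      have := (hper (u + (-k - 1)) v).1
      push_cast
      push_cast at ih
      have heq : (u + (-k - 1) + 1 : ℝ) = u + -k := by ring
      rw [heq] at this
      calc f (u + (-k - 1), v) = f (u + -k, v) := this.symm ▸ rfl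
        _ = f (u, v) := by rw [show (u + -(k:ℝ)) = u + -k by ring]; exact ih
  have h2 : ∀ (u v : ℝ) (n : ℤ), f (u, v + n) = f (u, v) := by
    intro u v n
    induction n using Int.induction_on with
    | zero => simp
    | succ k ih =>
      have := (hper u (v + k)).2
      push_cast
      push_cast at ih
      rw [show ((v + (k + 1) : ℝ)) = (v + k) + 1 by ring]
      rw [this]; exact ih
    | pred k ih =>
      have := (hper u (v + (-k - 1))).2
      push_cast
      push_cast at ih
      have heq : (v + (-k - 1) + 1 : ℝ) = v + -k := by ring
      rw [heq] at this
      rw [show ((v + (-k - 1) : ℝ)) = v + (-k - 1) by ring]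
      rw [← this]; exact ih
  intro p m n
  calc f (p.1 + m, p.2 + n) = f (p.1 + m, p.2) := h2 _ _ n
    _ = f (p.1, p.2) := h1 _ _ m
    _ = f p := by rfl

lemma torus_fract_eq
    (hper : ∀ u v : ℝ, f (u + 1, v) = f (u, v) ∧ f (u, v + 1) = f (u, v)) (p : ℝ × ℝ) :
    f (Int.fract p.1, Int.fract p.2) = f p := by
  have := torus_periodic_int hper (Int.fract p.1, Int.fract p.2) ⌊p.1⌋ ⌊p.2⌋
  simp only [Int.fract] at this ⊢
  rw [← this]
  norm_num

lemma torus_range_eq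
    (hper : ∀ u v : ℝ, f (u + 1, v) = f (u, v) ∧ f (u, v + 1) = f (u, v)) :
    Set.range f = f '' (Set.Icc 0 1 ×ˢ Set.Icc 0 1) := by
  apply Set.Subset.antisymm
  · rintro z ⟨p, rfl⟩
    refine ⟨(Int.fract p.1, Int.fract p.2), ?_, torus_fract_eq hper p⟩
    constructor
    · exact ⟨Int.fract_nonneg _, le_of_lt (Int.fract_lt_one _)⟩
    · exact ⟨Int.fract_nonneg _, le_of_lt (Int.fract_lt_one _)⟩
  · rintro z ⟨p, _, rfl⟩
    exact Set.mem_range_self p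

lemma torus_rep
    (hper : ∀ u v : ℝ, f (u + 1, v) = f (u, v) ∧ f (u, v + 1) = f (u, v))
    {z : Fin 3 → ℝ} (hz : z ∈ Set.range f) :
    ∃ q ∈ Set.Ico (0:ℝ) 1 ×ˢ Set.Ico (0:ℝ) 1, f q = z := by
  obtain ⟨p, rfl⟩ := hz
  exact ⟨(Int.fract p.1, Int.fract p.2),
    ⟨⟨Int.fract_nonneg _, Int.fract_lt_one _⟩, ⟨Int.fract_nonneg _, Int.fract_lt_one _⟩⟩,
    torus_fract_eq hper p⟩

lemma torus_fderiv_translate (hf1 : ContDiff ℝ 1 f) (c : ℝ × ℝ)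
    (hfc : ∀ p, f (p + c) = f p) (p : ℝ × ℝ) :
    fderiv ℝ f (p + c) = fderiv ℝ f p := by
  have h1 : HasFDerivAt (fun q => f (q + c)) (fderiv ℝ f (p + c)) p := by
    have hd : HasFDerivAt f (fderiv ℝ f (p + c)) (p + c) :=
      (hf1.differentiable one_ne_zero _).hasFDerivAt
    have ht : HasFDerivAt (fun q : ℝ × ℝ => q + c) (ContinuousLinearMap.id ℝ (ℝ × ℝ)) p :=
      (hasFDerivAt_id p).add_const c
    simpa using hd.comp p ht
  have h2 : HasFDerivAt f (fderiv ℝ f (p + c)) p := by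
    have heq : (fun q => f (q + c)) = f := funext hfc
    rwa [heq] at h1
  exact h2.fderiv.symm

/-- If `f p = f q` then the derivatives agree. -/
lemma torus_fderiv_eq (hf1 : ContDiff ℝ 1 f)
    (hper : ∀ u v : ℝ, f (u + 1, v) = f (u, v) ∧ f (u, v + 1) = f (u, v))
    (hinj : Set.InjOn f (Set.Ico (0:ℝ) 1 ×ˢ Set.Ico (0:ℝ) 1))
    {p q : ℝ × ℝ} (h : f p = f q) : fderiv ℝ f p = fderiv ℝ f q := by
  have hp' : f (Int.fract p.1, Int.fract p.2) = f p := torus_fract_eq hper p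
  have hq' : f (Int.fract q.1, Int.fract q.2) = f q := torus_fract_eq hper q
  have hmem : ∀ r : ℝ × ℝ, (Int.fract r.1, Int.fract r.2) ∈
      Set.Ico (0:ℝ) 1 ×ˢ Set.Ico (0:ℝ) 1 := fun r =>
    ⟨⟨Int.fract_nonneg _, Int.fract_lt_one _⟩, ⟨Int.fract_nonneg _, Int.fract_lt_one _⟩⟩
  have heq : (Int.fract p.1, Int.fract p.2) = (Int.fract q.1, Int.fract q.2) :=
    hinj (hmem p) (hmem q) (by rw [hp', hq', h])
  have hfr : ∀ r : ℝ × ℝ, fderiv ℝ f (Int.fract r.1, Int.fract r.2) = fderiv ℝ f r := by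
    intro r
    have hc : ∀ s : ℝ × ℝ, f (s + ((⌊r.1⌋ : ℝ), (⌊r.2⌋ : ℝ))) = f s := by
      intro s
      have := torus_periodic_int hper s ⌊r.1⌋ ⌊r.2⌋
      rw [← this]; rfl
    have := torus_fderiv_translate hf1 ((⌊r.1⌋ : ℝ), (⌊r.2⌋ : ℝ)) hc
      (Int.fract r.1, Int.fract r.2)
    rw [← this]
    congr 1
    apply Prod.ext
    · show Int.fract r.1 + (⌊r.1⌋ : ℝ) = r.1
      exact Int.fract_add_floor r.1
    · show Int.fract r.2 + (⌊r.2⌋ : ℝ) = r.2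
      exact Int.fract_add_floor r.2
  rw [← hfr p, ← hfr q, heq]

end Torus

set_option maxHeartbeats 1000000 in
/-- If `f q + s • w` is within `o(s)` of the torus, then `w` is tangent at `q`. -/
lemma torus_tangent_of_littleO {f : ℝ × ℝ → Fin 3 → ℝ}
    (hf1 : ContDiff ℝ 1 f)
    (hper : ∀ u v : ℝ, f (u + 1, v) = f (u, v) ∧ f (u, v + 1) = f (u, v))
    (hinj : Set.InjOn f (Set.Ico (0:ℝ) 1 ×ˢ Set.Ico (0:ℝ) 1))
    (hind : ∀ p : ℝ × ℝ, LinearIndependent ℝ ![fderiv ℝ f p (1, 0), fderiv ℝ f p (0, 1)])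
    {q : ℝ × ℝ} {w : Fin 3 → ℝ}
    (h : Filter.Tendsto (fun s => infDist (f q + s • w) (Set.range f) / s)
      (nhdsWithin 0 (Ioi 0)) (nhds 0)) :
    w ∈ Submodule.span ℝ {fderiv ℝ f q (1, 0), fderiv ℝ f q (0, 1)} := by
  classical
  set K : Set (Fin 3 → ℝ) := Set.range f with hK
  have hKc : IsCompact K := by
    rw [hK, torus_range_eq hper]
    exact (isCompact_Icc.prod isCompact_Icc).image (hf1.continuous)
  have hKne : K.Nonempty := Set.range_nonempty f
  -- the sequence of scales
  set sc : ℕ → ℝ := fun k => 1 / (k + 1) with hsc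
  have hscpos : ∀ k, 0 < sc k := fun k => by positivity
  have hsctend : Filter.Tendsto sc Filter.atTop (nhdsWithin 0 (Ioi 0)) := by
    rw [tendsto_nhdsWithin_iff]
    exact ⟨tendsto_one_div_add_atTop_nhds_zero_nat,
      Filter.Eventually.of_forall fun k => mem_Ioi.2 (hscpos k)⟩
  have hsc0 : Filter.Tendsto sc Filter.atTop (nhds 0) :=
    hsctend.mono_right nhdsWithin_le_nhds
  have hd := h.comp hsctend
  -- nearest points
  have hnear : ∀ k : ℕ, ∃ z ∈ K, infDist (f q + sc k • w) K = dist (f q + sc k • w) z :=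
    fun k => hKc.exists_infDist_eq_dist hKne _
  choose z hzK hzd using hnear
  have hrep : ∀ k : ℕ, ∃ a ∈ Set.Ico (0:ℝ) 1 ×ˢ Set.Ico (0:ℝ) 1, f a = z k :=
    fun k => torus_rep hper (hzK k)
  choose a haI hfa using hrep
  have haIcc : ∀ k, a k ∈ Set.Icc (0:ℝ) 1 ×ˢ Set.Icc (0:ℝ) 1 := fun k =>
    ⟨⟨(haI k).1.1, le_of_lt (haI k).1.2⟩, ⟨(haI k).2.1, le_of_lt (haI k).2.2⟩⟩
  obtain ⟨pstar, _, φ, hφ, haφ⟩ :=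
    (isCompact_Icc.prod isCompact_Icc).tendsto_subseq haIcc
  -- d k / sc k → 0 and d k → 0
  have hdist0 : Filter.Tendsto (fun k => infDist (f q + sc k • w) K) Filter.atTop (nhds 0) := by
    have := hd.mul hsc0
    simp only [Function.comp] at this
    have heq : ∀ k, infDist (f q + sc k • w) K / sc k * sc k
        = infDist (f q + sc k • w) K := fun k => div_mul_cancel₀ _ (ne_of_gt (hscpos k))
    rw [zero_mul] at this
    exact this.congr heq
  have hz0 : Filter.Tendsto z Filter.atTop (nhds (f q)) := by
    rw [tendsto_iff_dist_tendsto_zero]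
    have hb : ∀ k, dist (z k) (f q) ≤ infDist (f q + sc k • w) K + sc k * ‖w‖ := by
      intro k
      calc dist (z k) (f q) ≤ dist (z k) (f q + sc k • w) + dist (f q + sc k • w) (f q) :=
            dist_triangle _ _ _
        _ = infDist (f q + sc k • w) K + sc k * ‖w‖ := by
            rw [dist_comm (z k), ← hzd k]
            congr 1
            rw [dist_eq_norm, add_sub_cancel_left, norm_smul, Real.norm_eq_abs,
              abs_of_pos (hscpos k)]
    have hub : Filter.Tendsto (fun k => infDist (f q + sc k • w) K + sc k * ‖w‖)
        Filter.atTop (nhds 0) := by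
      have h9 := hdist0.add (hsc0.mul_const ‖w‖)
      have h10 : (0:ℝ) + 0 * ‖w‖ = 0 := by ring
      rwa [h10] at h9
    exact squeeze_zero (fun k => dist_nonneg) hb hub
  -- the limit point parameterizes f q
  have hfp : f pstar = f q := by
    have h1 : Filter.Tendsto (fun j => f (a (φ j))) Filter.atTop (nhds (f pstar)) :=
      (hf1.continuous.tendsto pstar).comp haφ
    have h2 : Filter.Tendsto (fun j => f (a (φ j))) Filter.atTop (nhds (f q)) := by
      have := hz0.comp (hφ.tendsto_atTop)
      simpa only [Function.comp_def, hfa] using this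
    exact tendsto_nhds_unique h1 h2
  set D := fderiv ℝ f q with hD
  have hDeq : fderiv ℝ f pstar = D := torus_fderiv_eq hf1 hper hinj hfp
  have hDf : HasFDerivAt f D pstar := by
    have := ((hf1.differentiable one_ne_zero) pstar).hasFDerivAt
    rwa [hDeq] at this
  -- decomposition of D on coordinates
  have hDv : ∀ v : ℝ × ℝ, D v = v.1 • D (1, 0) + v.2 • D (0, 1) := by
    intro v
    have hv : v = v.1 • ((1:ℝ), (0:ℝ)) + v.2 • ((0:ℝ), (1:ℝ)) := by
      apply Prod.ext <;> simp
    conv_lhs => rw [hv]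
    rw [map_add, ContinuousLinearMap.map_smul, ContinuousLinearMap.map_smul]
  -- injectivity and antilipschitz bound for D
  have hker : LinearMap.ker (D : (ℝ × ℝ) →L[ℝ] (Fin 3 → ℝ)).toLinearMap = ⊥ := by
    rw [LinearMap.ker_eq_bot']
    intro v hv
    have hv' : D v = 0 := hv
    rw [hDv v] at hv'
    have hpair := (LinearIndependent.pair_iff).1 (hind q) v.1 v.2
    have h12 : v.1 = 0 ∧ v.2 = 0 := by
      apply hpair
      convert hv' using 2 <;> simp [Matrix.cons_val_zero, Matrix.cons_val_one]
    apply Prod.ext <;> simp [h12.1, h12.2]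
  obtain ⟨cA, hcA0, hcAL⟩ :=
    LinearMap.exists_antilipschitzWith (D : (ℝ × ℝ) →L[ℝ] (Fin 3 → ℝ)).toLinearMap hker
  have hanti : ∀ v : ℝ × ℝ, ‖v‖ ≤ (cA : ℝ) * ‖D v‖ := by
    intro v
    have := hcAL.le_mul_dist v 0
    simpa [dist_eq_norm] using this
  -- little-o bound
  have hlittle := hDf.isLittleO
  -- notation
  set Δ : ℕ → ℝ × ℝ := fun j => a (φ j) - pstar with hΔ
  have hΔ0 : Filter.Tendsto Δ Filter.atTop (nhds 0) := by
    rw [hΔ]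
    have := haφ.sub_const pstar
    simpa using this
  set dd : ℕ → ℝ := fun k => infDist (f q + sc k • w) K with hdd
  have hDfa : ∀ j, ‖f (a (φ j)) - f q‖ ≤ dd (φ j) + sc (φ j) * ‖w‖ := by
    intro j
    calc ‖f (a (φ j)) - f q‖
        ≤ ‖f (a (φ j)) - (f q + sc (φ j) • w)‖ + ‖sc (φ j) • w‖ := by
          rw [show f (a (φ j)) - f q = (f (a (φ j)) - (f q + sc (φ j) • w)) + sc (φ j) • w
            by abel]
          exact norm_add_le _ _
      _ = dd (φ j) + sc (φ j) * ‖w‖ := by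
          congr 1
          · rw [hfa (φ j), ← dist_eq_norm, dist_comm, hdd]
            exact (hzd (φ j)).symm
          · rw [norm_smul, Real.norm_eq_abs, abs_of_pos (hscpos (φ j))]
  -- the error term
  set err : ℕ → Fin 3 → ℝ := fun j => f (a (φ j)) - f pstar - D (Δ j) with herr
  have herrO : ∀ c' > (0:ℝ), ∀ᶠ j in Filter.atTop, ‖err j‖ ≤ c' * ‖Δ j‖ := by
    intro c' hc'
    have hev := hlittle.def hc'
    have h5 : ∀ᶠ j in Filter.atTop, ‖f (a (φ j)) - f pstar - D (a (φ j) - pstar)‖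
        ≤ c' * ‖a (φ j) - pstar‖ := haφ.eventually hev
    filter_upwards [h5] with j hj
    simp only [herr, hΔ]
    exact hj
  -- bound on ‖Δ j‖
  have hΔbound : ∀ᶠ j in Filter.atTop,
      ‖Δ j‖ ≤ 2 * (cA : ℝ) * (dd (φ j) + sc (φ j) * ‖w‖) := by
    have hc' : (0:ℝ) < 1 / (2 * (cA : ℝ)) := by positivity
    filter_upwards [herrO _ hc'] with j hj
    have h1 : ‖D (Δ j)‖ ≤ ‖f (a (φ j)) - f q‖ + ‖err j‖ := by
      have heq9 : D (Δ j) = (f (a (φ j)) - f q) - err j := by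
        simp only [herr, hΔ]
        rw [hfp]; abel
      rw [heq9]
      exact norm_sub_le _ _
    have h2 := hanti (Δ j)
    have h3 : ‖Δ j‖ ≤ (cA:ℝ) * (dd (φ j) + sc (φ j) * ‖w‖) + (cA:ℝ) * (1 / (2 * (cA:ℝ))) * ‖Δ j‖ := by
      calc ‖Δ j‖ ≤ (cA : ℝ) * ‖D (Δ j)‖ := h2
        _ ≤ (cA : ℝ) * (‖f (a (φ j)) - f q‖ + ‖err j‖) := by
            apply mul_le_mul_of_nonneg_left h1 (le_of_lt (by exact_mod_cast hcA0))
        _ ≤ (cA : ℝ) * ((dd (φ j) + sc (φ j) * ‖w‖) + (1 / (2 * (cA:ℝ))) * ‖Δ j‖) := by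
            apply mul_le_mul_of_nonneg_left _ (le_of_lt (by exact_mod_cast hcA0))
            exact add_le_add (hDfa j) hj
        _ = (cA:ℝ) * (dd (φ j) + sc (φ j) * ‖w‖) + (cA:ℝ) * (1 / (2 * (cA:ℝ))) * ‖Δ j‖ := by
            ring
    have hca : (cA:ℝ) * (1 / (2 * (cA:ℝ))) = 1 / 2 := by
      field_simp
    rw [hca] at h3
    linarith
  -- ratio dd (φ j) / sc (φ j) → 0
  have hratio : Filter.Tendsto (fun j => dd (φ j) / sc (φ j)) Filter.atTop (nhds 0) := by
    have := hd.comp hφ.tendsto_atTop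
    simpa only [Function.comp_def] using this
  -- main term converges to w
  have hmain : Filter.Tendsto (fun j => (sc (φ j))⁻¹ • (f (a (φ j)) - f q))
      Filter.atTop (nhds w) := by
    rw [tendsto_iff_norm_sub_tendsto_zero]
    have hb : ∀ j, ‖(sc (φ j))⁻¹ • (f (a (φ j)) - f q) - w‖ = dd (φ j) / sc (φ j) := by
      intro j
      have h1 : (sc (φ j))⁻¹ • (f (a (φ j)) - f q) - w
          = (sc (φ j))⁻¹ • (f (a (φ j)) - (f q + sc (φ j) • w)) := by
        rw [smul_sub, smul_sub]
        rw [smul_add]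
        rw [smul_smul, inv_mul_cancel₀ (ne_of_gt (hscpos (φ j))), one_smul]
        abel
      rw [h1, norm_smul, Real.norm_eq_abs, abs_of_pos (inv_pos.2 (hscpos (φ j)))]
      rw [div_eq_inv_mul]
      congr 1
      rw [hfa (φ j), ← dist_eq_norm, dist_comm, hdd]
      exact (hzd (φ j)).symm
    have : (fun j => ‖(sc (φ j))⁻¹ • (f (a (φ j)) - f q) - w‖)
        = fun j => dd (φ j) / sc (φ j) := funext hb
    rw [this]
    exact hratio
  -- error term over sc → 0
  have herr0 : Filter.Tendsto (fun j => (sc (φ j))⁻¹ • err j) Filter.atTop (nhds 0) := by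
    rw [NormedAddCommGroup.tendsto_nhds_zero]
    intro ε hε
    have hC : (0:ℝ) < 2 * (cA:ℝ) * (1 + ‖w‖) + 1 := by positivity
    have hc' : (0:ℝ) < ε / (2 * (cA:ℝ) * (1 + ‖w‖) + 1) := by positivity
    have hev1 := herrO _ hc'
    have hev2 : ∀ᶠ j in Filter.atTop, dd (φ j) / sc (φ j) < 1 := by
      have := hratio
      rw [NormedAddCommGroup.tendsto_nhds_zero] at this
      filter_upwards [this 1 zero_lt_one] with j hj
      calc dd (φ j) / sc (φ j) ≤ ‖dd (φ j) / sc (φ j)‖ := le_abs_self _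
        _ < 1 := hj
    filter_upwards [hev1, hev2, hΔbound] with j h1 h2 h3
    rw [norm_smul, Real.norm_eq_abs, abs_of_pos (inv_pos.2 (hscpos (φ j)))]
    have hsc' := hscpos (φ j)
    have hdd0 : 0 ≤ dd (φ j) := infDist_nonneg
    have key : (sc (φ j))⁻¹ * ‖err j‖
        ≤ (ε / (2 * (cA:ℝ) * (1 + ‖w‖) + 1)) * (2 * (cA:ℝ) * (dd (φ j) / sc (φ j) + ‖w‖)) := by
      have := mul_le_mul_of_nonneg_left (le_trans h1 (mul_le_mul_of_nonneg_left h3 (le_of_lt hc')))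
        (le_of_lt (inv_pos.2 hsc'))
      calc (sc (φ j))⁻¹ * ‖err j‖
          ≤ (sc (φ j))⁻¹ * ((ε / (2 * (cA:ℝ) * (1 + ‖w‖) + 1))
            * (2 * (cA : ℝ) * (dd (φ j) + sc (φ j) * ‖w‖))) := this
        _ = (ε / (2 * (cA:ℝ) * (1 + ‖w‖) + 1)) * (2 * (cA:ℝ)
            * (dd (φ j) / sc (φ j) + ‖w‖)) := by
            field_simp
    have key2 : (ε / (2 * (cA:ℝ) * (1 + ‖w‖) + 1)) * (2 * (cA:ℝ) * (dd (φ j) / sc (φ j) + ‖w‖))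
        < ε := by
      have hlt : 2 * (cA:ℝ) * (dd (φ j) / sc (φ j) + ‖w‖) < 2 * (cA:ℝ) * (1 + ‖w‖) + 1 := by
        have hca0 : (0:ℝ) < (cA:ℝ) := by exact_mod_cast hcA0
        nlinarith [h2, norm_nonneg w, div_nonneg hdd0 (le_of_lt hsc')]
      calc (ε / (2 * (cA:ℝ) * (1 + ‖w‖) + 1)) * (2 * (cA:ℝ) * (dd (φ j) / sc (φ j) + ‖w‖))
          < (ε / (2 * (cA:ℝ) * (1 + ‖w‖) + 1)) * (2 * (cA:ℝ) * (1 + ‖w‖) + 1) := by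
            apply mul_lt_mul_of_pos_left hlt hc'
        _ = ε := by field_simp
    exact lt_of_le_of_lt key key2
  -- conclude: w is a limit of elements of the span
  have hsum : Filter.Tendsto (fun j => D ((sc (φ j))⁻¹ • Δ j)) Filter.atTop (nhds w) := by
    have heq : ∀ j, D ((sc (φ j))⁻¹ • Δ j)
        = (sc (φ j))⁻¹ • (f (a (φ j)) - f q) - (sc (φ j))⁻¹ • err j := by
      intro j
      rw [ContinuousLinearMap.map_smul, ← smul_sub]
      congr 1
      simp only [herr, hΔ]
      rw [hfp]
      abel
    have := hmain.sub herr0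
    rw [sub_zero] at this
    exact this.congr (fun j => (heq j).symm)
  have hmemS : ∀ j, D ((sc (φ j))⁻¹ • Δ j)
      ∈ Submodule.span ℝ {fderiv ℝ f q (1, 0), fderiv ℝ f q (0, 1)} := by
    intro j
    rw [hDv ((sc (φ j))⁻¹ • Δ j)]
    apply Submodule.add_mem
    · exact Submodule.smul_mem _ _ (Submodule.subset_span (Set.mem_insert _ _))
    · exact Submodule.smul_mem _ _ (Submodule.subset_span
        (Set.mem_insert_of_mem _ (Set.mem_singleton _)))
  have hclosed : IsClosed ((Submodule.span ℝ {fderiv ℝ f q (1, 0), fderiv ℝ f q (0, 1)} :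
      Submodule ℝ (Fin 3 → ℝ)) : Set (Fin 3 → ℝ)) :=
    Submodule.closed_of_finiteDimensional _
  exact hclosed.mem_of_tendsto hsum (Filter.Eventually.of_forall hmemS)

/-- Forward uniqueness for linear ODEs: a solution of `u' = A t (u t)` vanishing at `0`
vanishes for positive times. -/
lemma linear_ode_zero_forward {E : Type*} [NormedAddCommGroup E] [NormedSpace ℝ E]
    {A : ℝ → E →L[ℝ] E} (hA : Continuous A) {u : ℝ → E}
    (hu : ∀ t, HasDerivAt u ((A t) (u t)) t) (h1 : u 0 = 0) :
    ∀ T ≥ (0:ℝ), u T = 0 := by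
  intro T hT
  obtain ⟨m, hm⟩ := (isCompact_Icc (a := (0:ℝ)) (b := T)).exists_bound_of_continuousOn
    (hA.norm.continuousOn)
  set m' : ℝ := max m 0 with hm'
  have hm'0 : 0 ≤ m' := le_max_right _ _
  have key := norm_le_gronwallBound_of_norm_deriv_right_le (f := u)
    (f' := fun t => (A t) (u t)) (δ := 0) (K := m') (ε := 0) (a := 0) (b := T)
    (fun t ht => (hu t).continuousAt.continuousWithinAt)
    (fun t _ => (hu t).hasDerivWithinAt)
    (by rw [h1, norm_zero])
    (fun t ht => by
      have hb : ‖A t‖ ≤ m' := le_trans (by simpa using hm t (Ico_subset_Icc_self ht))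
        (le_max_left _ _)
      calc ‖(A t) (u t)‖ ≤ ‖A t‖ * ‖u t‖ := (A t).le_opNorm _
        _ ≤ m' * ‖u t‖ + 0 := by
            rw [add_zero]
            exact mul_le_mul_of_nonneg_right hb (norm_nonneg _))
  have := key T (right_mem_Icc.2 hT)
  rw [gronwallBound_ε0_δ0] at this
  exact norm_le_zero_iff.1 this

/-- Two-sided: a solution of a linear ODE vanishing somewhere vanishes everywhere. -/
lemma linear_ode_zero {E : Type*} [NormedAddCommGroup E] [NormedSpace ℝ E]
    {A : ℝ → E →L[ℝ] E} (hA : Continuous A) {u : ℝ → E}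
    (hu : ∀ t, HasDerivAt u ((A t) (u t)) t) {t₁ : ℝ} (h1 : u t₁ = 0) :
    ∀ t, u t = 0 := by
  intro t
  rcases le_total t₁ t with h | h
  · -- forward from t₁
    have hfor := linear_ode_zero_forward (A := fun τ => A (t₁ + τ))
      (hA.comp (continuous_const.add continuous_id)) (u := fun τ => u (t₁ + τ))
      (fun τ => by
        have hc : HasDerivAt (fun τ : ℝ => t₁ + τ) 1 τ := (hasDerivAt_id τ).const_add t₁
        have := (hu (t₁ + τ)).scomp τ hc
        simpa [Function.comp_def] using this)
      (by simpa using h1) (t - t₁) (by linarith)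
    simpa using hfor
  · -- backward from t₁
    have hfor := linear_ode_zero_forward (A := fun τ => -(A (t₁ - τ)))
      ((hA.comp (continuous_const.sub continuous_id)).neg) (u := fun τ => u (t₁ - τ))
      (fun τ => by
        have hc : HasDerivAt (fun τ : ℝ => t₁ - τ) (-1) τ := by
          simpa using (hasDerivAt_id τ).const_sub t₁
        have := (hu (t₁ - τ)).scomp τ hc
        simpa [neg_smul, Function.comp_def] using this)
      (by simpa using h1) (t₁ - t) (by linarith)
    simpa using hfor

/-- Derivative of `t ↦ M t *ᵥ w` from entrywise derivatives. -/
lemma hasDerivAt_mulVec {M N : ℝ → Matrix (Fin 3) (Fin 3) ℝ} {t : ℝ}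
    (hM : ∀ i j, HasDerivAt (fun s => M s i j) (N t i j) t) (w : Fin 3 → ℝ) :
    HasDerivAt (fun s => (M s).mulVec w) ((N t).mulVec w) t := by
  rw [hasDerivAt_pi]
  intro i
  have : ∀ s, (M s).mulVec w i = ∑ j : Fin 3, M s i j * w j := by
    intro s; rfl
  simp only [Matrix.mulVec, dotProduct]
  exact HasDerivAt.fun_sum (fun j _ => (hM i j).mul_const (w j))

/-- Decomposition of a continuous linear map on `ℝ²` against the standard basis. -/
lemma clm_prod_decomp (D : (ℝ × ℝ) →L[ℝ] (Fin 3 → ℝ)) (v : ℝ × ℝ) :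
    D v = v.1 • D (1, 0) + v.2 • D (0, 1) := by
  have hv : v = v.1 • ((1:ℝ), (0:ℝ)) + v.2 • ((0:ℝ), (1:ℝ)) := by
    apply Prod.ext <;> simp
  conv_lhs => rw [hv]
  rw [map_add, ContinuousLinearMap.map_smul, ContinuousLinearMap.map_smul]

/-- Auxiliary determinant identities. -/
lemma det3_combo_left (c d : ℝ) (a b : Fin 3 → ℝ) : det3 (c • a + d • b) a b = 0 := by
  simp only [det3_expand, Pi.add_apply, Pi.smul_apply, smul_eq_mul]
  ring

lemma det3_third_linear (a b u v : Fin 3 → ℝ) (s : ℝ) :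
    det3 a b (u + s • v) = det3 a b u + s * det3 a b v := by
  simp only [det3_expand, Pi.add_apply, Pi.smul_apply, smul_eq_mul]
  ring

/-- Two vectors are dependent iff some nontrivial combination vanishes. -/
lemma not_linearIndependent_pair {a b : Fin 3 → ℝ} {c d : ℝ}
    (h : c • a + d • b = 0) (hcd : c ≠ 0 ∨ d ≠ 0) :
    ¬ LinearIndependent ℝ ![a, b] := by
  intro hind
  obtain ⟨hc, hd⟩ := (LinearIndependent.pair_iff.1 hind) c d h
  rcases hcd with h' | h' <;> exact h' (by assumption)

/-- If `det3 w a b = 0` and `a, b` are independent then `w ∈ span {a, b}`. -/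
lemma mem_span_pair_of_det3_eq_zero {w a b : Fin 3 → ℝ} (h : det3 w a b = 0)
    (hab : LinearIndependent ℝ ![a, b]) :
    w ∈ Submodule.span ℝ ({a, b} : Set (Fin 3 → ℝ)) := by
  obtain ⟨v, hv0, hcombo⟩ := det3_zero_combo h
  by_cases hv0' : v 0 = 0
  · exfalso
    apply not_linearIndependent_pair (c := v 1) (d := v 2) _ _ hab
    · rw [hv0', zero_smul, zero_add] at hcombo
      exact hcombo
    · by_contra hcon
      push_neg at hcon
      apply hv0
      funext i
      fin_cases i
      · exact hv0'
      · exact hcon.1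
      · exact hcon.2
  · apply Submodule.mem_span_pair.2
    refine ⟨-(v 1) / v 0, -(v 2) / v 0, ?_⟩
    funext i
    have := congrFun hcombo i
    simp only [Pi.add_apply, Pi.smul_apply, smul_eq_mul, Pi.zero_apply] at this ⊢
    field_simp
    linear_combination (-1) * this

lemma det3_first_linear (u v a b : Fin 3 → ℝ) (s : ℝ) :
    det3 (u + s • v) a b = det3 u a b + s * det3 v a b := by
  simp only [det3_expand, Pi.add_apply, Pi.smul_apply, smul_eq_mul]
  ring

lemma det3_combo13 (c s : ℝ) (a b : Fin 3 → ℝ) : det3 (c • b - s • a) a b = 0 := by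
  simp only [det3_expand, Pi.sub_apply, Pi.smul_apply, smul_eq_mul]
  ring

lemma det3_cyclic_combo (s : ℝ) (a b c : Fin 3 → ℝ) : det3 a b (c + s • a) = det3 c a b := by
  simp only [det3_expand, Pi.add_apply, Pi.smul_apply, smul_eq_mul]
  ring

lemma det3_zero_third (a b : Fin 3 → ℝ) : det3 a b 0 = 0 := by
  simp only [det3_expand, Pi.zero_apply]
  ring

set_option maxHeartbeats 1600000 in
/-- If there are times `tp, tm` with `α_{tp}(ξ(x₀)) > 0`,
`α_{tm}(ξ(x₀)) < 0` and `σ_{tp} ≤ σ_{tm}`, then there is no invariant torus of `B`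
transverse to `ξ` through `x₀`. -/
theorem converse_KAM_conefield
    (B ξ η : (Fin 3 → ℝ) → (Fin 3 → ℝ))
    (JB : (Fin 3 → ℝ) → Matrix (Fin 3) (Fin 3) ℝ)
    (x : ℝ → Fin 3 → ℝ) (x₀ : Fin 3 → ℝ)
    (M : ℝ → Matrix (Fin 3) (Fin 3) ℝ)
    (hB : ContDiff ℝ 1 B)
    (hJB : ∀ p, HasFDerivAt B (LinearMap.toContinuousLinearMap (Matrix.mulVecLin (JB p))) p)
    (hx : ∀ t, HasDerivAt x (B (x t)) t) (hx0 : x 0 = x₀)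
    (hM : ∀ t i j, HasDerivAt (fun s => M s i j) ((JB (x t) * M t) i j) t)
    (hM0 : M 0 = 1)
    (hξ : Continuous ξ) (hη : Continuous η)
    (hframe : ∀ p, 0 < det3 (η p) (ξ p) (B p))
    (tp tm : ℝ)
    (hpos : 0 < det3 (ξ (x tp)) (B (x tp)) ((M tp).mulVec (ξ x₀)))
    (hneg : det3 (ξ (x tm)) (B (x tm)) ((M tm).mulVec (ξ x₀)) < 0)
    (hslope : det3 (ξ (x tp)) (B (x tp)) ((M tp).mulVec (η x₀)) /
                det3 (ξ (x tp)) (B (x tp)) ((M tp).mulVec (ξ x₀)) ≤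
              det3 (ξ (x tm)) (B (x tm)) ((M tm).mulVec (η x₀)) /
                det3 (ξ (x tm)) (B (x tm)) ((M tm).mulVec (ξ x₀))) :
    ¬ ∃ f : ℝ × ℝ → Fin 3 → ℝ,
        IsInvariantTorusTransverse B ξ f ∧ x₀ ∈ Set.range f := by
  rintro ⟨f, ⟨hf1, hfper, hfinj, hfind, hftan, hftrans⟩, p₀, hp₀⟩
  have hxc : Continuous x := by
    rw [continuous_iff_continuousAt]; exact fun t => (hx t).continuousAt
  have hfderivB : ∀ p, fderiv ℝ B p
      = LinearMap.toContinuousLinearMap (Matrix.mulVecLin (JB p)) := fun p => (hJB p).fderiv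
  -- the torus
  set K : Set (Fin 3 → ℝ) := Set.range f with hK
  have hKc : IsCompact K := by
    rw [hK, torus_range_eq hfper]
    exact (isCompact_Icc.prod isCompact_Icc).image hf1.continuous
  have hKne : K.Nonempty := Set.range_nonempty f
  -- curves on the torus
  have hcurve : ∀ (q : ℝ × ℝ) (v : ℝ × ℝ),
      HasDerivAt (fun h : ℝ => f (q + h • v)) (fderiv ℝ f q v) 0 := by
    intro q v
    have hd : HasFDerivAt f (fderiv ℝ f q) q := (hf1.differentiable one_ne_zero q).hasFDerivAt
    have hsm : HasDerivAt (fun h : ℝ => h • v) v 0 := by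
      simpa using (hasDerivAt_id (0:ℝ)).smul_const v
    have hc : HasDerivAt (fun h : ℝ => q + h • v) v 0 := hsm.const_add q
    have := HasFDerivAt.comp_hasDerivAt_of_eq (hl := hd) (hf := hc) (hy := by simp)
    simpa [Function.comp_def] using this
  have htanσ : ∀ σ : ℝ, ∀ y ∈ K, ∃ c : ℝ → Fin 3 → ℝ,
      (∀ h, c h ∈ K) ∧ c 0 = y ∧ HasDerivAt c (σ • B y) 0 := by
    rintro σ y ⟨q, rfl⟩
    obtain ⟨cu, cv, hcucv⟩ := Submodule.mem_span_pair.1 (hftan q)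
    refine ⟨fun h => f (q + h • (σ • (cu, cv))), fun h => Set.mem_range_self _, by simp, ?_⟩
    have h2 := hcurve q (σ • (cu, cv))
    have h3 : fderiv ℝ f q (σ • (cu, cv)) = σ • B (f q) := by
      rw [ContinuousLinearMap.map_smul]
      congr 1
      rw [clm_prod_decomp]
      simpa using hcucv
    rwa [h3] at h2
  have htanB : ∀ y ∈ K, ∃ c : ℝ → Fin 3 → ℝ,
      (∀ h, c h ∈ K) ∧ c 0 = y ∧ HasDerivAt c (B y) 0 := by
    intro y hy
    obtain ⟨c, h1, h2, h3⟩ := htanσ 1 y hy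
    exact ⟨c, h1, h2, by simpa using h3⟩
  have htanBneg : ∀ y ∈ K, ∃ c : ℝ → Fin 3 → ℝ,
      (∀ h, c h ∈ K) ∧ c 0 = y ∧ HasDerivAt c (-(B y)) 0 := by
    intro y hy
    obtain ⟨c, h1, h2, h3⟩ := htanσ (-1) y hy
    exact ⟨c, h1, h2, by simpa [neg_smul] using h3⟩
  have hx0K : x 0 ∈ K := by rw [hx0, ← hp₀]; exact Set.mem_range_self p₀
  -- reversed-time trajectory
  have hxrev : ∀ τ, HasDerivAt (fun τ : ℝ => x (-τ)) (-(B (x (-τ)))) τ := by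
    intro τ
    have hc : HasDerivAt (fun τ : ℝ => -τ) (-1 : ℝ) τ := by
      exact hasDerivAt_neg τ
    have := (hx (-τ)).scomp τ hc
    simpa [neg_smul, Function.comp_def] using this
  -- invariance of the torus
  have hinv : ∀ t, x t ∈ K := by
    intro t
    rcases le_or_gt 0 t with ht | ht
    · exact forward_invariance hKne hKc hB htanB hx hx0K t ⟨ht, le_refl t⟩
    · have := forward_invariance hKne hKc hB.neg htanBneg hxrev (by simpa using hx0K)
        (-t) ⟨by linarith, le_refl _⟩
      simpa using this
  -- derivative of M t *ᵥ w
  have hu' : ∀ (w : Fin 3 → ℝ) (t : ℝ),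
      HasDerivAt (fun s => (M s).mulVec w) (fderiv ℝ B (x t) ((M t).mulVec w)) t := by
    intro w t
    have h1 := hasDerivAt_mulVec (N := fun t => JB (x t) * M t) (hM t) w
    have h2 : fderiv ℝ B (x t) ((M t).mulVec w) = (JB (x t) * M t).mulVec w := by
      rw [hfderivB (x t)]
      show Matrix.mulVecLin (JB (x t)) ((M t).mulVec w) = _
      rw [Matrix.mulVecLin_apply, Matrix.mulVec_mulVec]
    rwa [h2]
  -- initial tangency in o(s)
  have hδ0 : ∀ w₀ ∈ Submodule.span ℝ {fderiv ℝ f p₀ (1, 0), fderiv ℝ f p₀ (0, 1)},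
      Filter.Tendsto (fun s => infDist (x 0 + s • w₀) K / s)
        (nhdsWithin 0 (Ioi 0)) (nhds 0) := by
    intro w₀ hw₀
    obtain ⟨cu, cv, hcucv⟩ := Submodule.mem_span_pair.1 hw₀
    have hDw : fderiv ℝ f p₀ (cu, cv) = w₀ := by
      rw [clm_prod_decomp]; simpa using hcucv
    have hg : HasDerivAt (fun s : ℝ => f (p₀ + s • (cu, cv))) w₀ 0 := by
      rw [← hDw]; exact hcurve p₀ (cu, cv)
    have htt := (hasDerivAt_iff_tendsto.1 hg).mono_left
      (nhdsWithin_le_nhds (s := Ioi (0:ℝ)))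
    apply squeeze_zero' (Filter.Eventually.mono self_mem_nhdsWithin (fun s hs =>
      div_nonneg infDist_nonneg (le_of_lt hs)))
      (Filter.Eventually.mono self_mem_nhdsWithin (fun s hs => ?_)) htt
    have hsp : (0:ℝ) < s := hs
    have hmem : f (p₀ + s • (cu, cv)) ∈ K := Set.mem_range_self _
    have h1 : infDist (x 0 + s • w₀) K
        ≤ ‖f (p₀ + s • (cu, cv)) - f (p₀ + (0:ℝ) • (cu, cv)) - (s - 0) • w₀‖ := by
      calc infDist (x 0 + s • w₀) K ≤ dist (x 0 + s • w₀) (f (p₀ + s • (cu, cv))) :=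
            infDist_le_dist_of_mem hmem
        _ = ‖f (p₀ + s • (cu, cv)) - f (p₀ + (0:ℝ) • (cu, cv)) - (s - 0) • w₀‖ := by
            rw [dist_eq_norm, ← norm_neg]
            congr 1
            rw [hx0, ← hp₀]
            simp only [sub_zero, zero_smul, add_zero]
            abel
    calc infDist (x 0 + s • w₀) K / s
        ≤ ‖f (p₀ + s • (cu, cv)) - f (p₀ + (0:ℝ) • (cu, cv)) - (s - 0) • w₀‖ / s :=
          (div_le_div_iff_of_pos_right hsp).2 h1
      _ = ‖s - 0‖⁻¹ * ‖f (p₀ + s • (cu, cv)) - f (p₀ + (0:ℝ) • (cu, cv)) - (s - 0) • w₀‖ := by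
          rw [sub_zero, Real.norm_eq_abs, abs_of_pos hsp, div_eq_inv_mul]
  -- tangency propagation to all times
  have hMw_tan : ∀ w₀ ∈ Submodule.span ℝ {fderiv ℝ f p₀ (1, 0), fderiv ℝ f p₀ (0, 1)},
      ∀ t : ℝ, Filter.Tendsto (fun s => infDist (x t + s • ((M t).mulVec w₀)) K / s)
        (nhdsWithin 0 (Ioi 0)) (nhds 0) := by
    intro w₀ hw₀ t
    have hδ0' : Filter.Tendsto (fun s => infDist (x 0 + s • ((M 0).mulVec w₀)) K / s)
        (nhdsWithin 0 (Ioi 0)) (nhds 0) := by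
      have heq : (fun s => infDist (x 0 + s • ((M 0).mulVec w₀)) K / s)
          = fun s => infDist (x 0 + s • w₀) K / s := by
        funext s; rw [hM0, Matrix.one_mulVec]
      rw [heq]; exact hδ0 w₀ hw₀
    rcases le_or_gt 0 t with ht | ht
    · exact tangent_propagation hKne hKc hB htanB hx (fun τ => hu' w₀ τ) hinv ht hδ0'
    · -- reversed time
      have hrev := tangent_propagation (V := fun p => -(B p)) hKne hKc hB.neg htanBneg
        (x := fun τ => x (-τ)) (u := fun τ => (M (-τ)).mulVec w₀)
        (fun τ => hxrev τ)
        (fun τ => by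
          have hc : HasDerivAt (fun τ : ℝ => -τ) (-1 : ℝ) τ := by
            exact hasDerivAt_neg τ
          have h1 := (hu' w₀ (-τ)).scomp τ hc
          have h2 : fderiv ℝ (fun p => -(B p)) (x (-τ)) ((M (-τ)).mulVec w₀)
              = -(fderiv ℝ B (x (-τ)) ((M (-τ)).mulVec w₀)) := by
            rw [fderiv_fun_neg]; rfl
          rw [h2]
          simpa [neg_smul, Function.comp_def] using h1)
        (fun τ => hinv (-τ)) (by linarith : (0:ℝ) ≤ -t)
        (by simpa using hδ0')
      simpa using hrev
  -- membership of propagated tangent vectors in local tangent planes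
  have hmem : ∀ w₀ ∈ Submodule.span ℝ {fderiv ℝ f p₀ (1, 0), fderiv ℝ f p₀ (0, 1)},
      ∀ t : ℝ, ∃ q : ℝ × ℝ, f q = x t ∧
        (M t).mulVec w₀ ∈ Submodule.span ℝ {fderiv ℝ f q (1, 0), fderiv ℝ f q (0, 1)} ∧
        B (x t) ∈ Submodule.span ℝ {fderiv ℝ f q (1, 0), fderiv ℝ f q (0, 1)} ∧
        ξ (x t) ∉ Submodule.span ℝ {fderiv ℝ f q (1, 0), fderiv ℝ f q (0, 1)} := by
    intro w₀ hw₀ t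
    obtain ⟨q, hq⟩ := hinv t
    refine ⟨q, hq, ?_, ?_, ?_⟩
    · apply torus_tangent_of_littleO hf1 hfper hfinj hfind
      rw [hq]
      exact hMw_tan w₀ hw₀ t
    · have := hftan q; rwa [hq] at this
    · have := hftrans q; rwa [hq] at this
  -- construct the initial tangent vector w₀ = η x₀ + s₀ • ξ x₀
  set Du : Fin 3 → ℝ := fderiv ℝ f p₀ (1, 0) with hDu
  set Dv : Fin 3 → ℝ := fderiv ℝ f p₀ (0, 1) with hDv
  have hDuDv : LinearIndependent ℝ ![Du, Dv] := hfind p₀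
  have hlamxi : det3 (ξ x₀) Du Dv ≠ 0 := by
    intro h0
    have hmem' := mem_span_pair_of_det3_eq_zero h0 hDuDv
    have := hftrans p₀
    rw [hp₀] at this
    exact this hmem'
  set s₀ : ℝ := -(det3 (η x₀) Du Dv) / det3 (ξ x₀) Du Dv with hs₀
  set w₀ : Fin 3 → ℝ := η x₀ + s₀ • ξ x₀ with hw₀def
  have hw₀ : w₀ ∈ Submodule.span ℝ ({Du, Dv} : Set (Fin 3 → ℝ)) := by
    apply mem_span_pair_of_det3_eq_zero _ hDuDv
    rw [hw₀def, det3_first_linear]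
    have hst : s₀ * det3 (ξ x₀) Du Dv = -(det3 (η x₀) Du Dv) := by
      rw [hs₀, div_mul_cancel₀ _ hlamxi]
    linarith
  have hw₀B : ∀ c : ℝ, w₀ ≠ c • B x₀ := by
    intro c hc
    have hη : η x₀ = c • B x₀ - s₀ • ξ x₀ := by
      rw [← hc, hw₀def]; abel
    have h9 : det3 (η x₀) (ξ x₀) (B x₀) = 0 := by
      rw [hη]; exact det3_combo13 c s₀ (ξ x₀) (B x₀)
    have := hframe x₀
    rw [h9] at this
    exact lt_irrefl 0 this
  -- the determinant function along the trajectory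
  set α : ℝ → ℝ := fun t => det3 (ξ (x t)) (B (x t)) ((M t).mulVec w₀) with hα
  have hMcont : Continuous fun t => (M t).mulVec w₀ :=
    continuous_iff_continuousAt.2 fun t =>
      (hasDerivAt_mulVec (N := fun t => JB (x t) * M t) (hM t) w₀).continuousAt
  have hαc : Continuous α := by
    have hc1 : ∀ i : Fin 3, Continuous fun t => ξ (x t) i :=
      fun i => (continuous_apply i).comp (hξ.comp hxc)
    have hc2 : ∀ i : Fin 3, Continuous fun t => B (x t) i :=
      fun i => (continuous_apply i).comp ((hB.continuous).comp hxc)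
    have hc3 : ∀ i : Fin 3, Continuous fun t => (M t).mulVec w₀ i :=
      fun i => (continuous_apply i).comp hMcont
    have heq : α = fun t => ξ (x t) 0 * B (x t) 1 * (M t).mulVec w₀ 2
        - ξ (x t) 0 * B (x t) 2 * (M t).mulVec w₀ 1
        - ξ (x t) 1 * B (x t) 0 * (M t).mulVec w₀ 2
        + ξ (x t) 1 * B (x t) 2 * (M t).mulVec w₀ 0
        + ξ (x t) 2 * B (x t) 0 * (M t).mulVec w₀ 1
        - ξ (x t) 2 * B (x t) 1 * (M t).mulVec w₀ 0 := funext fun t => det3_expand _ _ _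
    rw [heq]
    exact (((((((hc1 0).mul (hc2 1)).mul (hc3 2)).sub
      (((hc1 0).mul (hc2 2)).mul (hc3 1))).sub
      (((hc1 1).mul (hc2 0)).mul (hc3 2))).add
      (((hc1 1).mul (hc2 2)).mul (hc3 0))).add
      (((hc1 2).mul (hc2 0)).mul (hc3 1))).sub
      (((hc1 2).mul (hc2 1)).mul (hc3 0))
  have hα0 : 0 < α 0 := by
    have h1 : α 0 = det3 (ξ x₀) (B x₀) w₀ := by
      simp only [hα]
      rw [hx0, hM0, Matrix.one_mulVec]
    have h2 : det3 (ξ x₀) (B x₀) w₀ = det3 (η x₀) (ξ x₀) (B x₀) := by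
      rw [hw₀def]
      exact det3_cyclic_combo s₀ (ξ x₀) (B x₀) (η x₀)
    rw [h1, h2]
    exact hframe x₀
  -- α never vanishes
  have hαne : ∀ t, α t ≠ 0 := by
    intro t h0
    obtain ⟨q, hq, hMwq, hBq, hξq⟩ := hmem w₀ hw₀ t
    obtain ⟨v, hv0, hcombo⟩ := det3_zero_combo h0
    by_cases hv0' : v 0 = 0
    · by_cases hv2 : v 2 = 0
      · have hv1 : v 1 ≠ 0 := by
          intro hv1
          apply hv0
          funext i
          fin_cases i
          · exact hv0'
          · exact hv1
          · exact hv2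
        have hB0 : B (x t) = 0 := by
          rw [hv0', hv2, zero_smul, zero_smul, zero_add, add_zero] at hcombo
          exact (smul_eq_zero.1 hcombo).resolve_left hv1
        have := hframe (x t)
        rw [hB0, det3_zero_third] at this
        exact lt_irrefl 0 this
      · -- M t *ᵥ w₀ = c • B (x t)
        set c : ℝ := -(v 1) / v 2 with hcdef
        have hMwB : (M t).mulVec w₀ = c • B (x t) := by
          funext i
          have := congrFun hcombo i
          simp only [Pi.add_apply, Pi.smul_apply, smul_eq_mul, Pi.zero_apply, hv0',
            zero_mul, zero_add] at this
          simp only [Pi.smul_apply, smul_eq_mul, hcdef]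
          field_simp
          linear_combination this
        have hAcont : Continuous fun τ => fderiv ℝ B (x τ) :=
          (hB.continuous_fderiv one_ne_zero).comp hxc
        have hBx : ∀ τ, HasDerivAt (B ∘ x) (fderiv ℝ B (x τ) (B (x τ))) τ :=
          fun τ => ((hB.differentiable one_ne_zero (x τ)).hasFDerivAt).comp_hasDerivAt τ (hx τ)
        have huu : ∀ τ, HasDerivAt (fun τ => (M τ).mulVec w₀ - c • B (x τ))
            (fderiv ℝ B (x τ) ((M τ).mulVec w₀ - c • B (x τ))) τ := by
          intro τ
          have h1 := (hu' w₀ τ).sub ((hBx τ).const_smul c)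
          have h2 : fderiv ℝ B (x τ) ((M τ).mulVec w₀ - c • B (x τ))
              = fderiv ℝ B (x τ) ((M τ).mulVec w₀) - c • fderiv ℝ B (x τ) (B (x τ)) := by
            rw [map_sub, ContinuousLinearMap.map_smul]
          rw [h2]
          exact h1
        have huut : (fun τ => (M τ).mulVec w₀ - c • B (x τ)) t = 0 := by
          simp only [hMwB, sub_self]
        have h00 := linear_ode_zero hAcont huu huut 0
        simp only [hM0, Matrix.one_mulVec, hx0] at h00
        rw [sub_eq_zero] at h00
        exact hw₀B c h00
    · -- ξ (x t) is a combination of B (x t) and M t *ᵥ w₀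
      have hξcomb : ξ (x t) = (-(v 1) / v 0) • B (x t)
          + (-(v 2) / v 0) • ((M t).mulVec w₀) := by
        funext i
        have := congrFun hcombo i
        simp only [Pi.add_apply, Pi.smul_apply, smul_eq_mul, Pi.zero_apply] at this ⊢
        field_simp
        linear_combination this
      apply hξq
      rw [hξcomb]
      exact Submodule.add_mem _ (Submodule.smul_mem _ _ hBq) (Submodule.smul_mem _ _ hMwq)
  -- α is everywhere positive
  have hαpos : ∀ t, 0 < α t := by
    intro t
    rcases lt_trichotomy (α t) 0 with h | h | h
    · exfalso
      have hsub := intermediate_value_uIcc (a := t) (b := 0) (hαc.continuousOn)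
      have h0mem : (0:ℝ) ∈ Icc (α t) (α 0) := ⟨le_of_lt h, le_of_lt hα0⟩
      have h0mem' : (0:ℝ) ∈ Set.uIcc (α t) (α 0) := by
        rw [Set.uIcc_of_le (by linarith : α t ≤ α 0)]
        exact h0mem
      obtain ⟨t₂, _, ht₂⟩ := hsub h0mem'
      exact hαne t₂ ht₂
    · exact absurd h (hαne t)
    · exact h
  -- final slope contradiction
  have hexp : ∀ t : ℝ, (M t).mulVec w₀
      = (M t).mulVec (η x₀) + s₀ • ((M t).mulVec (ξ x₀)) := by
    intro t
    rw [hw₀def, Matrix.mulVec_add, Matrix.mulVec_smul]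
  have hp' := hαpos tp
  have hm' := hαpos tm
  simp only [hα] at hp' hm'
  rw [hexp tp, det3_third_linear] at hp'
  rw [hexp tm, det3_third_linear] at hm'
  set Ap := det3 (ξ (x tp)) (B (x tp)) ((M tp).mulVec (η x₀)) with hAp
  set Bp := det3 (ξ (x tp)) (B (x tp)) ((M tp).mulVec (ξ x₀)) with hBp
  set Am := det3 (ξ (x tm)) (B (x tm)) ((M tm).mulVec (η x₀)) with hAm
  set Bm := det3 (ξ (x tm)) (B (x tm)) ((M tm).mulVec (ξ x₀)) with hBm
  have h1 : -s₀ < Ap / Bp := by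
    rw [lt_div_iff₀ hpos]
    linarith
  have h2 : Am / Bm < -s₀ := by
    rw [div_lt_iff_of_neg hneg]
    linarith
  linarith
end

section
/- If f : ℝ² → ℝ³ is a C¹ map with f(u+1,v) = f(u,v+1) = f(u,v) for all (u,v), injective on [0,1) × [0,1), whose partial derivatives ∂_u f(u,v), ∂_v f(u,v) are linearly independent at every point, and such that B(f(u,v)) lies in the span of ∂_u f(u,v) and ∂_v f(u,v) for all (u,v), and if x₀ lies in the range of f, then x(t) lies in the range of f for all t ∈ ℝ; i.e., a compact embedded torus to which B is everywhere tangent is invariant under the field-line flow. -/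
open Set Metric Filter Real
open scoped Topology

lemma stays_forward {T : Set (Fin 3 → ℝ)} (hTc : IsCompact T) (hTne : T.Nonempty)
    (C : (Fin 3 → ℝ) → (Fin 3 → ℝ)) (L : ℝ) (hL : 0 ≤ L)
    (hlip : ∀ y z, infDist y T ≤ 1 → infDist z T ≤ 1 → ‖C y - C z‖ ≤ L * ‖y - z‖)
    (htan : ∀ ε > (0:ℝ), ∃ δ > (0:ℝ), ∀ y ∈ T, ∀ h : ℝ, 0 < h → h ≤ δ →
        infDist (y + h • C y) T ≤ ε * h)
    (x : ℝ → Fin 3 → ℝ) (hx : ∀ t, HasDerivAt x (C (x t)) t)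
    (t₀ : ℝ) (h0 : x t₀ ∈ T) : ∃ a > (0:ℝ), ∀ t ∈ Icc t₀ (t₀ + a), x t ∈ T := by
  have xcont : Continuous x := by
    apply continuous_iff_continuousAt.2 fun t => (hx t).continuousAt
  set φ : ℝ → ℝ := fun t => infDist (x t) T with hφ
  have φcont : Continuous φ := (continuous_infDist_pt T).comp xcont
  have φ0 : φ t₀ = 0 := infDist_zero_of_mem h0
  -- choose a with φ ≤ 1 on [t₀ - a, t₀ + a]
  have hev : ∀ᶠ t in 𝓝 t₀, φ t < 1 := by
    have := φcont.continuousAt (x := t₀)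
    exact this.eventually_lt continuousAt_const (by rw [φ0]; norm_num)
  obtain ⟨a, ha, haa⟩ := Metric.eventually_nhds_iff.1 hev
  refine ⟨a / 2, by positivity, ?_⟩
  have hone : ∀ t ∈ Icc t₀ (t₀ + a / 2), φ t ≤ 1 := by
    intro t ht
    refine (haa ?_).le
    rw [Real.dist_eq, abs_lt]
    constructor <;> [linarith [ht.1]; linarith [ht.2, ha]]
  -- main Gronwall estimate
  have key : ∀ ε > (0:ℝ), ∀ t ∈ Icc t₀ (t₀ + a / 2),
      φ t ≤ gronwallBound 0 L ε (t - t₀) := by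
    intro ε hε t ht
    obtain ⟨δ₁, hδ₁, htan'⟩ := htan (ε / 2) (by positivity)
    refine le_gronwallBound_of_liminf_deriv_right_le (f' := fun t => L * φ t + ε)
      (φcont.continuousOn) ?_ (by rw [φ0]) (fun s hs => le_rfl) t ht
    intro s hs r hr
    obtain ⟨y, hyT, hyd⟩ := hTc.exists_infDist_eq_dist hTne (x s)
    have hlo := hasDerivAt_iff_isLittleO.1 (hx s)
    have hsm := hlo.def (show (0:ℝ) < ε / 8 by positivity)
    have hev2 : ∀ᶠ z in 𝓝[>] s, (z - s)⁻¹ * (φ z - φ s) < r := by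
      filter_upwards [Ioo_mem_nhdsGT_of_mem (left_mem_Ico.2 (lt_add_of_pos_right s hδ₁)),
        hsm.filter_mono nhdsWithin_le_nhds] with z hz hsmall
      set h := z - s with hdef
      have hh : 0 < h := sub_pos.2 hz.1
      have hhδ : h ≤ δ₁ := by rw [hdef]; linarith [hz.2]
      clear_value h
      have h1 : φ z ≤ infDist (y + h • C y) T + dist (x z) (y + h • C y) :=
        infDist_le_infDist_add_dist
      have h2 : infDist (y + h • C y) T ≤ ε / 2 * h := htan' y hyT h hh hhδ
      have h3 : dist (x z) (y + h • C y) ≤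
          ‖x z - x s - h • C (x s)‖ + h * ‖C (x s) - C y‖ + ‖x s - y‖ := by
        have : x z - (y + h • C y) =
            (x z - x s - h • C (x s)) + h • (C (x s) - C y) + (x s - y) := by
          simp [smul_sub]; abel
        rw [dist_eq_norm, this]
        calc ‖(x z - x s - h • C (x s)) + h • (C (x s) - C y) + (x s - y)‖
            ≤ ‖(x z - x s - h • C (x s)) + h • (C (x s) - C y)‖ + ‖x s - y‖ :=
              norm_add_le _ _
          _ ≤ ‖x z - x s - h • C (x s)‖ + ‖h • (C (x s) - C y)‖ + ‖x s - y‖ := by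
              gcongr; exact norm_add_le _ _
          _ = ‖x z - x s - h • C (x s)‖ + h * ‖C (x s) - C y‖ + ‖x s - y‖ := by
              rw [norm_smul, Real.norm_eq_abs, abs_of_pos hh]
      have h4 : ‖x z - x s - h • C (x s)‖ ≤ ε / 8 * h := by
        have := hsmall
        rw [Real.norm_eq_abs, abs_of_pos hh] at this
        exact this
      have h8 : ‖x s - y‖ = φ s := by rw [← dist_eq_norm]; exact hyd.symm
      have h5 : ‖C (x s) - C y‖ ≤ L * φ s := by
        have h6 : infDist (x s) T ≤ 1 := hone s ⟨hs.1, hs.2.le⟩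
        have h7 : infDist y T ≤ 1 := by
          rw [infDist_zero_of_mem hyT]; norm_num
        rw [← h8]; exact hlip (x s) y h6 h7
      have hφz : φ z ≤ φ s + h * (L * φ s + ε / 2 + ε / 8) := by
        calc φ z ≤ ε / 2 * h + (‖x z - x s - h • C (x s)‖ + h * ‖C (x s) - C y‖
            + ‖x s - y‖) := by linarith [h1, h2, h3]
          _ ≤ ε / 2 * h + (ε / 8 * h + h * (L * φ s) + φ s) := by
              rw [h8]; gcongr
          _ = φ s + h * (L * φ s + ε / 2 + ε / 8) := by ring
      have hq : h⁻¹ * (φ z - φ s) ≤ L * φ s + ε / 2 + ε / 8 := by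
        rw [inv_mul_le_iff₀ hh]
        nlinarith
      have hr' : L * φ s + ε < r := hr
      calc h⁻¹ * (φ z - φ s) ≤ L * φ s + ε / 2 + ε / 8 := hq
        _ < r := by linarith
    exact hev2.frequently
  -- ε → 0
  intro t ht
  have hφt : φ t ≤ 0 := by
    have htend : Tendsto (fun ε => gronwallBound 0 L ε (t - t₀)) (𝓝[>] 0) (𝓝 0) := by
      have := (gronwallBound_continuous_ε 0 L (t - t₀)).tendsto 0
      rw [gronwallBound_ε0, zero_mul] at this
      exact this.mono_left nhdsWithin_le_nhds
    refine ge_of_tendsto htend ?_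
    filter_upwards [self_mem_nhdsWithin] with ε hε
    exact key ε hε t ht
  have : φ t = 0 := le_antisymm hφt infDist_nonneg
  exact (hTc.isClosed.mem_iff_infDist_zero hTne).2 this

private lemma torus_invariant_aux
    (B : (Fin 3 → ℝ) → (Fin 3 → ℝ))
    (x : ℝ → Fin 3 → ℝ) (x₀ : Fin 3 → ℝ)
    (hB : ContDiff ℝ 1 B)
    (hx : ∀ t, HasDerivAt x (B (x t)) t) (hx0 : x 0 = x₀)
    (f : ℝ × ℝ → Fin 3 → ℝ)
    (hC1 : ContDiff ℝ 1 f)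
    (hper : ∀ u v : ℝ, f (u + 1, v) = f (u, v) ∧ f (u, v + 1) = f (u, v))
    (hLI : ∀ p : ℝ × ℝ, LinearIndependent ℝ ![fderiv ℝ f p (1, 0), fderiv ℝ f p (0, 1)])
    (hspan : ∀ p : ℝ × ℝ,
      B (f p) ∈ Submodule.span ℝ {fderiv ℝ f p (1, 0), fderiv ℝ f p (0, 1)})
    (hx₀ : x₀ ∈ Set.range f) :
    ∀ t : ℝ, x t ∈ Set.range f := by
  classical
  set K : Set (ℝ × ℝ) := Icc (0:ℝ) 1 ×ˢ Icc (0:ℝ) 1 with hK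
  set T : Set (Fin 3 → ℝ) := f '' K with hT
  -- range f = T
  have hred : ∀ p : ℝ × ℝ, f p = f (Int.fract p.1, Int.fract p.2) := by
    intro ⟨u, v⟩
    have p1 : Function.Periodic (fun u => f (u, v)) 1 := fun w => (hper w v).1
    have e1 : f (u, v) = f (Int.fract u, v) := by
      have := p1.sub_int_mul_eq (x := u) ⌊u⌋
      simp only [mul_one] at this
      rw [Int.self_sub_floor] at this
      exact this.symm
    have p2 : Function.Periodic (fun w => f (Int.fract u, w)) 1 := fun w =>
      (hper (Int.fract u) w).2
    have e2 : f (Int.fract u, v) = f (Int.fract u, Int.fract v) := by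
      have := p2.sub_int_mul_eq (x := v) ⌊v⌋
      simp only [mul_one] at this
      rw [Int.self_sub_floor] at this
      exact this.symm
    exact e1.trans e2
  have hrange : Set.range f = T := by
    apply Subset.antisymm
    · rintro y ⟨p, rfl⟩
      rw [hred p]
      exact mem_image_of_mem f ⟨⟨(Int.fract_nonneg _), (Int.fract_lt_one _).le⟩,
        ⟨(Int.fract_nonneg _), (Int.fract_lt_one _).le⟩⟩
    · rintro y ⟨p, _, rfl⟩; exact mem_range_self p
  have hKc : IsCompact K := (isCompact_Icc).prod isCompact_Icc
  have hTc : IsCompact T := hKc.image hC1.continuous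
  have h00K : ((0:ℝ), (0:ℝ)) ∈ K := ⟨⟨le_refl 0, zero_le_one⟩, ⟨le_refl 0, zero_le_one⟩⟩
  have hTne : T.Nonempty := ⟨f (0,0), mem_image_of_mem f h00K⟩
  have Dfcont : Continuous (fderiv ℝ f) := hC1.continuous_fderiv one_ne_zero
  -- derivative decomposition
  have hkey : ∀ (p : ℝ × ℝ) (w : ℝ × ℝ),
      fderiv ℝ f p w = w.1 • fderiv ℝ f p (1, 0) + w.2 • fderiv ℝ f p (0, 1) := by
    intro p w
    have hw : w = w.1 • ((1:ℝ), (0:ℝ)) + w.2 • ((0:ℝ), (1:ℝ)) := by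
      ext <;> simp
    conv_lhs => rw [hw]
    rw [map_add, map_smul, map_smul]
  -- lower bound m
  obtain ⟨q₀, hq₀, hmin⟩ := (hKc.prod (isCompact_sphere (0 : ℝ × ℝ) 1)).exists_isMinOn
    (⟨((0,0), (1,0)), h00K, by simp [Prod.norm_def]⟩)
    (((Dfcont.comp continuous_fst).clm_apply continuous_snd).norm.continuousOn)
  set m : ℝ := ‖fderiv ℝ f q₀.1 q₀.2‖ with hm
  have hmpos : 0 < m := by
    rw [hm, norm_pos_iff]
    intro hzero
    rw [hkey] at hzero
    have hli := Fintype.linearIndependent_iff.1 (hLI q₀.1) ![q₀.2.1, q₀.2.2]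
    have hsum : ∑ i : Fin 2, ![q₀.2.1, q₀.2.2] i •
        ![fderiv ℝ f q₀.1 (1, 0), fderiv ℝ f q₀.1 (0, 1)] i = 0 := by
      rw [Fin.sum_univ_two]
      simpa using hzero
    have h1 := hli hsum 0
    have h2 := hli hsum 1
    simp at h1 h2
    have : q₀.2 = 0 := by ext <;> simp [h1, h2]
    have hs : q₀.2 ∈ sphere (0 : ℝ × ℝ) 1 := hq₀.2
    rw [mem_sphere_iff_norm, this] at hs
    simp at hs
  have hlow : ∀ p ∈ K, ∀ w : ℝ × ℝ, m * ‖w‖ ≤ ‖fderiv ℝ f p w‖ := by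
    intro p hp w
    rcases eq_or_ne w 0 with rfl | hw
    · simp
    · have hwn : ‖w‖ ≠ 0 := norm_ne_zero_iff.2 hw
      have hu : ‖w‖⁻¹ • w ∈ sphere (0 : ℝ × ℝ) 1 := by
        simp [norm_smul, inv_mul_cancel₀ hwn]
      have := hmin (a := (p, ‖w‖⁻¹ • w)) ⟨hp, hu⟩
      simp only [Function.comp_apply, Set.mem_setOf_eq] at this
      rw [map_smul, norm_smul, norm_inv, norm_norm] at this
      rw [hm]
      calc ‖fderiv ℝ f q₀.1 q₀.2‖ * ‖w‖ ≤ ‖w‖⁻¹ * ‖fderiv ℝ f p w‖ * ‖w‖ := by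
            gcongr
        _ = ‖fderiv ℝ f p w‖ := by field_simp
  -- bound Mb
  obtain ⟨Mb, hMb⟩ := hKc.exists_bound_of_continuousOn
    ((hB.continuous.comp hC1.continuous).continuousOn (s := K))
  have hMb0 : 0 ≤ Mb := le_trans (norm_nonneg _) (hMb _ h00K)
  set M : ℝ := Mb / m with hMdef
  have hM0 : 0 ≤ M := div_nonneg hMb0 hmpos.le
  -- tangency
  have htanC : ∀ C : (Fin 3 → ℝ) → (Fin 3 → ℝ),
      (∀ p : ℝ × ℝ, C (f p) ∈ Submodule.span ℝ
        {fderiv ℝ f p (1, 0), fderiv ℝ f p (0, 1)}) →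
      (∀ p ∈ K, ‖C (f p)‖ ≤ Mb) →
      ∀ ε > (0:ℝ), ∃ δ > (0:ℝ), ∀ y ∈ T, ∀ h : ℝ, 0 < h → h ≤ δ →
        infDist (y + h • C y) T ≤ ε * h := by
    intro C hCs hCb ε hε
    -- uniform continuity of fderiv f on a big ball
    have hUC := (isCompact_closedBall (0 : ℝ × ℝ) (2 + M)).uniformContinuousOn_of_continuous
      Dfcont.continuousOn
    rw [Metric.uniformContinuousOn_iff] at hUC
    obtain ⟨δ', hδ', hUC⟩ := hUC (ε / (M + 1)) (by positivity)
    refine ⟨min 1 (δ' / (M + 1)), by positivity, ?_⟩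
    rintro y ⟨p, hpK, rfl⟩ h hh hhδ
    -- solve for w
    obtain ⟨a, b, hab⟩ := Submodule.mem_span_pair.1 (hCs p)
    set w : ℝ × ℝ := (a, b) with hw
    have hDfw : fderiv ℝ f p w = C (f p) := by rw [hkey]; exact hab
    have hwb : ‖w‖ ≤ M := by
      have h1 : m * ‖w‖ ≤ ‖fderiv ℝ f p w‖ := hlow p hpK w
      rw [hDfw] at h1
      have h2 : ‖C (f p)‖ ≤ Mb := hCb p hpK
      rw [hMdef, le_div_iff₀ hmpos]
      nlinarith
    set q : ℝ × ℝ := p + h • w with hq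
    -- norms
    have hpnorm : ‖p‖ ≤ 1 := by
      rw [Prod.norm_def]
      rcases hpK with ⟨⟨h1, h2⟩, ⟨h3, h4⟩⟩
      apply max_le <;> rw [Real.norm_eq_abs, abs_le] <;> constructor <;> linarith
    have hhw : ‖h • w‖ ≤ M := by
      rw [norm_smul, Real.norm_eq_abs, abs_of_pos hh]
      calc h * ‖w‖ ≤ 1 * M := by
            have : h ≤ 1 := le_trans hhδ (min_le_left _ _)
            have := norm_nonneg w
            nlinarith
        _ = M := one_mul M
    have hseg : segment ℝ p q ⊆ closedBall (0 : ℝ × ℝ) (2 + M) := by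
      intro z hz
      rw [segment_eq_image'] at hz
      obtain ⟨s, hs, rfl⟩ := hz
      rw [mem_closedBall, dist_zero_right]
      beta_reduce
      rw [hq]
      have heq : p + s • (p + h • w - p) = p + s • (h • w) := by module
      rw [heq]
      calc ‖p + s • (h • w)‖ ≤ ‖p‖ + ‖s • (h • w)‖ := norm_add_le _ _
        _ ≤ 1 + 1 * M := by
            gcongr
            rw [norm_smul, Real.norm_eq_abs, abs_of_nonneg hs.1]
            have := norm_nonneg (h • w)
            nlinarith [hs.2]
        _ ≤ 2 + M := by linarith
    have hclose : ∀ z ∈ segment ℝ p q, ‖fderiv ℝ f z - fderiv ℝ f p‖ ≤ ε / (M + 1) := by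
      intro z hz
      have hzball := hseg hz
      have hpball : p ∈ closedBall (0 : ℝ × ℝ) (2 + M) := by
        rw [mem_closedBall, dist_zero_right]; linarith
      have hdist : dist z p < δ' := by
        rw [segment_eq_image'] at hz
        obtain ⟨s, hs, rfl⟩ := hz
        rw [dist_eq_norm]
        beta_reduce
        rw [hq]
        have heq : p + s • (p + h • w - p) - p = s • (h • w) := by module
        rw [heq, norm_smul, Real.norm_eq_abs, abs_of_nonneg hs.1]
        have h1 : ‖h • w‖ ≤ h * M := by
          rw [norm_smul, Real.norm_eq_abs, abs_of_pos hh]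
          have := norm_nonneg w; nlinarith [hwb]
        have h2 : h ≤ δ' / (M + 1) := le_trans hhδ (min_le_right _ _)
        have h3 : s * ‖h • w‖ ≤ h * M := by
          have := norm_nonneg (h • w); nlinarith [hs.2, hs.1]
        have h2' : h * (M + 1) ≤ δ' := (le_div_iff₀ (by positivity)).1 h2
        nlinarith
      have := hUC z hzball p hpball hdist
      rw [dist_eq_norm] at this
      exact this.le
    -- mean value
    have hmv := Convex.norm_image_sub_le_of_norm_hasFDerivWithin_le
      (f := fun z => f z - fderiv ℝ f p z)
      (f' := fun z => fderiv ℝ f z - fderiv ℝ f p)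
      (fun z hz => (((hC1.differentiable one_ne_zero z).hasFDerivAt).sub
        ((fderiv ℝ f p).hasFDerivAt)).hasFDerivWithinAt)
      hclose (convex_segment p q) (left_mem_segment ℝ p q) (right_mem_segment ℝ p q)
    have hqp : q - p = h • w := by rw [hq]; abel
    have hfq : f q - fderiv ℝ f p q - (f p - fderiv ℝ f p p)
        = f q - f p - h • C (f p) := by
      have : fderiv ℝ f p q - fderiv ℝ f p p = fderiv ℝ f p (q - p) := by
        rw [map_sub]
      have h2 : fderiv ℝ f p (q - p) = h • C (f p) := by
        rw [hqp, map_smul, hDfw]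
      rw [← h2, ← this]; abel
    rw [hfq] at hmv
    have hle : ‖f q - f p - h • C (f p)‖ ≤ ε / (M + 1) * (h * M) := by
      calc ‖f q - f p - h • C (f p)‖ ≤ ε / (M + 1) * ‖q - p‖ := hmv
        _ ≤ ε / (M + 1) * (h * M) := by
            gcongr
            rw [hqp, norm_smul, Real.norm_eq_abs, abs_of_pos hh]
            have := norm_nonneg w; nlinarith [hwb]
    have hfqT : f q ∈ T := by rw [← hrange]; exact mem_range_self q
    calc infDist (f p + h • C (f p)) T ≤ dist (f p + h • C (f p)) (f q) :=
          infDist_le_dist_of_mem hfqT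
      _ = ‖f q - f p - h • C (f p)‖ := by
          rw [dist_eq_norm']
          congr 1
          abel
      _ ≤ ε / (M + 1) * (h * M) := hle
      _ ≤ ε * h := by
          rw [div_mul_eq_mul_div, div_le_iff₀ (by positivity : (0:ℝ) < M + 1)]
          nlinarith
  -- Lipschitz bound for B near T
  obtain ⟨R, hR⟩ := hTc.isBounded.subset_closedBall 0
  have hreg : ∀ y : Fin 3 → ℝ, infDist y T ≤ 1 →
      y ∈ closedBall (0 : Fin 3 → ℝ) (R + 2) := by
    intro y hy
    obtain ⟨z, hzT, hzd⟩ := hTc.exists_infDist_eq_dist hTne y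
    have h1 : dist y z ≤ 1 := by rw [← hzd]; exact hy
    have h2 : dist z 0 ≤ R := mem_closedBall.1 (hR hzT)
    rw [mem_closedBall]
    calc dist y 0 ≤ dist y z + dist z 0 := dist_triangle _ _ _
      _ ≤ R + 2 := by linarith
  obtain ⟨L₀, hL₀⟩ := (isCompact_closedBall (0 : Fin 3 → ℝ) (R + 2)).exists_bound_of_continuousOn
    ((hB.continuous_fderiv one_ne_zero).continuousOn)
  set L : ℝ := max L₀ 0 with hLdef
  have hLnn : 0 ≤ L := le_max_right _ _
  have hlipB : ∀ y z : Fin 3 → ℝ, infDist y T ≤ 1 → infDist z T ≤ 1 →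
      ‖B y - B z‖ ≤ L * ‖y - z‖ := by
    intro y z hy hz
    exact Convex.norm_image_sub_le_of_norm_hasFDerivWithin_le
      (f := B) (f' := fun w => fderiv ℝ B w)
      (fun w _ => (hB.differentiable one_ne_zero w).hasFDerivAt.hasFDerivWithinAt)
      (fun w hw => le_trans (hL₀ w hw) (le_max_left _ _))
      (convex_closedBall _ _) (hreg z hz) (hreg y hy)
  have hlipnegB : ∀ y z : Fin 3 → ℝ, infDist y T ≤ 1 → infDist z T ≤ 1 →
      ‖-B y - -B z‖ ≤ L * ‖y - z‖ := by
    intro y z hy hz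
    rw [neg_sub_neg, norm_sub_rev]
    exact hlipB y z hy hz
  have htanB := htanC B hspan (fun p hp => hMb p hp)
  have htannegB := htanC (fun y => -B y)
    (fun p => Submodule.neg_mem _ (hspan p))
    (fun p hp => by rw [norm_neg]; exact hMb p hp)
  have xcont : Continuous x := by
    apply continuous_iff_continuousAt.2 fun t => (hx t).continuousAt
  -- the set of times on the torus is clopen
  set S : Set ℝ := x ⁻¹' T with hS
  have hSc : IsClosed S := hTc.isClosed.preimage xcont
  have hSo : IsOpen S := by
    rw [isOpen_iff_mem_nhds]
    intro t₀ ht₀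
    obtain ⟨a, ha, hfa⟩ := stays_forward hTc hTne B L hLnn hlipB htanB x hx t₀ ht₀
    have hzd : ∀ s : ℝ, HasDerivAt (fun s : ℝ => x (2 * t₀ - s))
        (-B (x (2 * t₀ - s))) s := by
      intro s
      have h1 : HasDerivAt (fun s : ℝ => 2 * t₀ - s) (-1) s := by
        simpa using (hasDerivAt_id s).const_sub (2 * t₀)
      have h2 := HasDerivAt.scomp (𝕜 := ℝ) s (hx (2 * t₀ - s)) h1
      simp at h2
      exact h2
    have hz0 : x (2 * t₀ - t₀) ∈ T := by
      rw [show 2 * t₀ - t₀ = t₀ by ring]; exact ht₀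
    obtain ⟨a', ha', hfa'⟩ := stays_forward hTc hTne (fun y => -B y) L hLnn hlipnegB
      htannegB (fun s => x (2 * t₀ - s)) hzd t₀ hz0
    have hsub : Icc (t₀ - a') (t₀ + a) ⊆ S := by
      intro t ht
      rcases le_total t t₀ with h | h
      · have hmem : 2 * t₀ - t ∈ Icc t₀ (t₀ + a') :=
          ⟨by linarith, by linarith [ht.1]⟩
        have h2 := hfa' (2 * t₀ - t) hmem
        rw [show 2 * t₀ - (2 * t₀ - t) = t by ring] at h2
        exact h2
      · exact hfa t ⟨h, ht.2⟩
    exact mem_of_superset (Icc_mem_nhds (by linarith) (by linarith)) hsub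
  have hS0 : (0:ℝ) ∈ S := by
    have : x 0 ∈ T := by rw [hx0, ← hrange]; exact hx₀
    exact this
  have hSuniv : S = univ := IsClopen.eq_univ ⟨hSc, hSo⟩ ⟨0, hS0⟩
  intro t
  rw [hrange]
  have : t ∈ S := hSuniv ▸ mem_univ t
  exact this

/-- `f : ℝ² → ℝ³` defines an invariant torus of the vector field `B`: it is C¹,
doubly periodic with period 1, injective on a fundamental domain, an immersion,
and `B` is everywhere tangent to it. -/
def IsInvariantTorus (B : (Fin 3 → ℝ) → (Fin 3 → ℝ))
    (f : ℝ × ℝ → Fin 3 → ℝ) : Prop :=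
  ContDiff ℝ 1 f ∧
  (∀ u v : ℝ, f (u + 1, v) = f (u, v) ∧ f (u, v + 1) = f (u, v)) ∧
  Set.InjOn f (Set.Ico (0:ℝ) 1 ×ˢ Set.Ico (0:ℝ) 1) ∧
  (∀ p : ℝ × ℝ, LinearIndependent ℝ ![fderiv ℝ f p (1, 0), fderiv ℝ f p (0, 1)]) ∧
  (∀ p : ℝ × ℝ,
    B (f p) ∈ Submodule.span ℝ {fderiv ℝ f p (1, 0), fderiv ℝ f p (0, 1)})

/-- A compact embedded torus to which `B` is everywhere tangent is
invariant under the field-line flow: if `x₀` lies on the torus then so does `x(t)`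
for all `t`. -/
theorem torus_invariant_under_fieldline_flow
    (B : (Fin 3 → ℝ) → (Fin 3 → ℝ))
    (x : ℝ → Fin 3 → ℝ) (x₀ : Fin 3 → ℝ)
    (hB : ContDiff ℝ 1 B)
    (hx : ∀ t, HasDerivAt x (B (x t)) t) (hx0 : x 0 = x₀)
    (f : ℝ × ℝ → Fin 3 → ℝ)
    (hf : IsInvariantTorus B f)
    (hx₀ : x₀ ∈ Set.range f) :
    ∀ t : ℝ, x t ∈ Set.range f := by
  obtain ⟨hC1, hper, -, hLI, hspan⟩ := hf
  exact torus_invariant_aux B x x₀ hB hx hx0 f hC1 hper hLI hspan hx₀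
end

section
/- Define ψ(r,θ) = B₀R₀(R₀ − √(R₀² − r²)) and ϑ(r,θ) = 2·arctan(√((R₀−r)/(R₀+r))·tan(θ/2)) for 0 < r < R₀ and −π < θ < π. Then the Jacobian determinant of the map (r,θ) ↦ (ψ,ϑ) equals B₀R₀·r/(R₀ + r·cos θ); equivalently, with R = R₀ + r cos θ and B^φ = B₀R₀/R², one has dψ ∧ dϑ = r·R·B^φ·dr ∧ dθ, i.e., the restriction of the magnetic flux-form to a poloidal section takes the canonical form dψ ∧ dϑ in the adapted coordinates. -/
open Real

lemma det_of_prod (f : (ℝ × ℝ) →ₗ[ℝ] ℝ × ℝ) :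
    LinearMap.det f = (f (1,0)).1 * (f (0,1)).2 - (f (0,1)).1 * (f (1,0)).2 := by
  rw [← LinearMap.det_toMatrix (Module.Basis.finTwoProd ℝ), Matrix.det_fin_two]
  simp [LinearMap.toMatrix_apply, Module.Basis.finTwoProd]

/-- The Jacobian determinant of the map `(r,θ) ↦ (ψ,ϑ)` to the adapted
coordinates equals `B₀R₀·r/(R₀ + r·cos θ)`, i.e. `dψ ∧ dϑ = r·R·B^φ · dr ∧ dθ` with
`R = R₀ + r cos θ` and `B^φ = B₀R₀/R²`. -/
theorem jacobian_adapted_coordinates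
    (B₀ R₀ : ℝ) (hB₀ : 0 < B₀) (hR₀ : 0 < R₀)
    (F : ℝ × ℝ → ℝ × ℝ)
    (hF : F = fun p =>
      (B₀ * R₀ * (R₀ - Real.sqrt (R₀ ^ 2 - p.1 ^ 2)),
       2 * Real.arctan (Real.sqrt ((R₀ - p.1) / (R₀ + p.1)) * Real.tan (p.2 / 2))))
    (r θ : ℝ) (hr : 0 < r) (hrR : r < R₀) (hθ₁ : -π < θ) (hθ₂ : θ < π) :
    LinearMap.det ((fderiv ℝ F (r, θ)).toLinearMap) =
      B₀ * R₀ * r / (R₀ + r * Real.cos θ) := by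
  have hRr : (0:ℝ) < R₀ + r := by linarith
  have hRr' : (0:ℝ) < R₀ - r := by linarith
  have hs2 : (0:ℝ) < R₀ ^ 2 - r ^ 2 := by nlinarith
  set s := Real.sqrt (R₀ ^ 2 - r ^ 2) with hs
  have hspos : 0 < s := Real.sqrt_pos.2 hs2
  have hssq : s ^ 2 = R₀ ^ 2 - r ^ 2 := Real.sq_sqrt hs2.le
  set k := Real.sqrt ((R₀ - r) / (R₀ + r)) with hkdef
  have hqpos : (0:ℝ) < (R₀ - r) / (R₀ + r) := div_pos hRr' hRr
  have hkpos : 0 < k := Real.sqrt_pos.2 hqpos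
  have hks : k * (R₀ + r) = s := by
    have h2 : 0 ≤ k * (R₀ + r) := by positivity
    have h1 : (k * (R₀ + r)) ^ 2 = s ^ 2 := by
      rw [mul_pow, hkdef, Real.sq_sqrt hqpos.le, hssq]
      field_simp
      ring
    calc k * (R₀ + r) = Real.sqrt ((k * (R₀ + r)) ^ 2) := (Real.sqrt_sq h2).symm
      _ = Real.sqrt (s ^ 2) := by rw [h1]
      _ = s := Real.sqrt_sq hspos.le
  -- half angle facts
  have hc1 : -(π/2) < θ/2 := by linarith
  have hc2 : θ/2 < π/2 := by linarith
  have hcpos : 0 < Real.cos (θ/2) := Real.cos_pos_of_mem_Ioo ⟨hc1, hc2⟩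
  have hcne : Real.cos (θ/2) ≠ 0 := hcpos.ne'
  set c := Real.cos (θ/2) with hc
  set t := Real.tan (θ/2) with ht
  -- derivative of first component (one variable)
  have hinner : HasDerivAt (fun x : ℝ => R₀ ^ 2 - x ^ 2) (-(2 * r ^ 1)) r :=
    (hasDerivAt_pow 2 r).const_sub (R₀ ^ 2)
  have hsq : HasDerivAt Real.sqrt (1 / (2 * s)) (R₀ ^ 2 - r ^ 2) :=
    Real.hasDerivAt_sqrt hs2.ne'
  have hcomp1 : HasDerivAt (fun x : ℝ => Real.sqrt (R₀ ^ 2 - x ^ 2))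
      (1 / (2 * s) * -(2 * r ^ 1)) r := hsq.comp r hinner
  have h1d : HasDerivAt (fun x : ℝ => B₀ * R₀ * (R₀ - Real.sqrt (R₀ ^ 2 - x ^ 2)))
      (B₀ * R₀ * -(1 / (2 * s) * -(2 * r ^ 1))) r := (hcomp1.const_sub R₀).const_mul (B₀ * R₀)
  have hF1 : HasFDerivAt (fun p : ℝ × ℝ => B₀ * R₀ * (R₀ - Real.sqrt (R₀ ^ 2 - p.1 ^ 2)))
      ((B₀ * R₀ * -(1 / (2 * s) * -(2 * r ^ 1))) • ContinuousLinearMap.fst ℝ ℝ ℝ) (r, θ) :=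
    h1d.comp_hasFDerivAt (f := Prod.fst) (r, θ) hasFDerivAt_fst
  -- derivative of κ
  have hu : HasDerivAt (fun x : ℝ => R₀ - x) (-1) r := by
    simpa using (hasDerivAt_id r).const_sub R₀
  have hv : HasDerivAt (fun x : ℝ => R₀ + x) 1 r := by
    simpa using (hasDerivAt_id r).const_add R₀
  have hq : HasDerivAt (fun x : ℝ => (R₀ - x) / (R₀ + x))
      ((-1 * (R₀ + r) - (R₀ - r) * 1) / (R₀ + r) ^ 2) r := hu.div hv hRr.ne'
  have hκ : HasDerivAt (fun x : ℝ => Real.sqrt ((R₀ - x) / (R₀ + x)))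
      (1 / (2 * k) * ((-1 * (R₀ + r) - (R₀ - r) * 1) / (R₀ + r) ^ 2)) r :=
    (Real.hasDerivAt_sqrt hqpos.ne').comp r hq
  -- derivative of τ
  have hhalf : HasDerivAt (fun y : ℝ => y / 2) (1 / 2) θ := by
    simpa using (hasDerivAt_id θ).div_const 2
  have hτ : HasDerivAt (fun y : ℝ => Real.tan (y / 2)) (1 / Real.cos (θ/2) ^ 2 * (1/2)) θ :=
    by have := (Real.hasDerivAt_tan hcne).comp θ hhalf; exact this
  -- fderiv of u
  have hκF : HasFDerivAt (fun p : ℝ × ℝ => Real.sqrt ((R₀ - p.1) / (R₀ + p.1)))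
      ((1 / (2 * k) * ((-1 * (R₀ + r) - (R₀ - r) * 1) / (R₀ + r) ^ 2)) •
        ContinuousLinearMap.fst ℝ ℝ ℝ) (r, θ) :=
    hκ.comp_hasFDerivAt (f := Prod.fst) (r, θ) hasFDerivAt_fst
  have hτF : HasFDerivAt (fun p : ℝ × ℝ => Real.tan (p.2 / 2))
      ((1 / Real.cos (θ/2) ^ 2 * (1/2)) • ContinuousLinearMap.snd ℝ ℝ ℝ) (r, θ) :=
    hτ.comp_hasFDerivAt (f := Prod.snd) (r, θ) hasFDerivAt_snd
  have huF := hκF.mul hτF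
  have harc : HasDerivAt (fun y : ℝ => 2 * Real.arctan y)
      (2 * (1 / (1 + (k * t) ^ 2))) (k * t) := by
    simpa using (Real.hasDerivAt_arctan (k * t)).const_mul 2
  have hF2 := harc.comp_hasFDerivAt (r, θ) huF
  have hFd : HasFDerivAt F
      (((B₀ * R₀ * -(1 / (2 * s) * -(2 * r ^ 1))) • ContinuousLinearMap.fst ℝ ℝ ℝ).prod
        ((2 * (1 / (1 + (k * t) ^ 2))) •
          (k • (1 / c ^ 2 * (1/2)) • ContinuousLinearMap.snd ℝ ℝ ℝ +
            t • (1 / (2 * k) * ((-1 * (R₀ + r) - (R₀ - r) * 1) / (R₀ + r) ^ 2)) •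
              ContinuousLinearMap.fst ℝ ℝ ℝ))) (r, θ) := by
    rw [hF]
    exact HasFDerivAt.prodMk hF1 hF2
  rw [hFd.fderiv, det_of_prod]
  simp only [ContinuousLinearMap.coe_coe, ContinuousLinearMap.prod_apply,
    ContinuousLinearMap.smul_apply, ContinuousLinearMap.add_apply,
    ContinuousLinearMap.coe_fst', ContinuousLinearMap.coe_snd', smul_eq_mul]
  have hk2 : k ^ 2 = (R₀ - r) / (R₀ + r) := Real.sq_sqrt hqpos.le
  have hpyth : Real.sin (θ/2) ^ 2 = 1 - c ^ 2 := by
    have h := Real.sin_sq_add_cos_sq (θ/2); rw [← hc] at h; linarith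
  have hcost : Real.cos θ = 2 * c ^ 2 - 1 := by
    have h := Real.cos_sq (θ/2)
    rw [show 2 * (θ/2) = θ by ring] at h
    rw [← hc] at h; linarith
  have ht' : t = Real.sin (θ/2) / c := Real.tan_eq_sin_div_cos (θ/2)
  have hden : 0 < R₀ + r * Real.cos θ := by nlinarith [Real.neg_one_le_cos θ]
  have h1 : 1 + (k * t) ^ 2 = (R₀ + r * Real.cos θ) / ((R₀ + r) * c ^ 2) := by
    rw [ht', hcost, mul_pow, div_pow, hk2]
    field_simp
    linear_combination ((R₀ - r)) * hpyth
  rw [h1]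
  field_simp
  linear_combination (k * (R₀ + r)) * hks
end

section
/- For 0 ≤ r < R₀ and −π < θ < π, setting ϑ = 2·arctan(√((R₀−r)/(R₀+r))·tan(θ/2)), the cylindrical radius R = R₀ + r·cos θ satisfies R = (R₀² − r²)/(R₀ − r·cos ϑ). -/
open Real

/-- With the adapted poloidal angle
`ϑ = 2·arctan(√((R₀−r)/(R₀+r))·tan(θ/2))`, the cylindrical radius
`R = R₀ + r·cos θ` satisfies `R = (R₀² − r²)/(R₀ − r·cos ϑ)`. -/
theorem cylindrical_radius_in_adapted_coordinates
    (R₀ : ℝ) (hR₀ : 0 < R₀)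
    (r θ : ℝ) (hr : 0 ≤ r) (hrR : r < R₀) (hθ₁ : -π < θ) (hθ₂ : θ < π)
    (ϑ : ℝ)
    (hϑ : ϑ = 2 * Real.arctan (Real.sqrt ((R₀ - r) / (R₀ + r)) * Real.tan (θ / 2))) :
    R₀ + r * Real.cos θ = (R₀ ^ 2 - r ^ 2) / (R₀ - r * Real.cos ϑ) := by
  set t := Real.tan (θ / 2) with ht
  set k := Real.sqrt ((R₀ - r) / (R₀ + r)) with hk
  have hRr : 0 < R₀ + r := by linarith
  have hRr' : 0 < R₀ - r := by linarith
  have hk2 : k ^ 2 = (R₀ - r) / (R₀ + r) := by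
    rw [hk, sq_sqrt (by positivity)]
  -- cos(θ/2) > 0
  have hc : 0 < Real.cos (θ / 2) := by
    apply Real.cos_pos_of_mem_Ioo
    constructor <;> [linarith; linarith]
  have hc0 : Real.cos (θ / 2) ≠ 0 := ne_of_gt hc
  have ht2 : 1 + t ^ 2 = 1 / Real.cos (θ / 2) ^ 2 := by
    rw [ht, Real.tan_eq_sin_div_cos]
    have := Real.sin_sq_add_cos_sq (θ / 2)
    field_simp
    linarith
  have hcθ : Real.cos θ = 2 * Real.cos (θ / 2) ^ 2 - 1 := by
    have h := Real.cos_two_mul (θ / 2)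
    rw [show 2 * (θ / 2) = θ by ring] at h
    linarith
  have hcθ' : Real.cos θ = (1 - t ^ 2) / (1 + t ^ 2) := by
    rw [hcθ]
    rw [ht2]
    field_simp
    have := ht2
    field_simp at this
    nlinarith [this]
  have ht2pos : (0:ℝ) < 1 + t ^ 2 := by positivity
  have hu2pos : (0:ℝ) < 1 + (k * t) ^ 2 := by positivity
  have hcϑ : Real.cos ϑ = 2 * (1 / (1 + (k * t) ^ 2)) - 1 := by
    rw [hϑ, Real.cos_two_mul, Real.cos_sq_arctan]
  have hcϑ' : Real.cos ϑ = (1 - (k*t) ^ 2) / (1 + (k*t) ^ 2) := by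
    rw [hcϑ]; field_simp; ring
  have hkt2 : (k * t) ^ 2 = (R₀ - r) / (R₀ + r) * t ^ 2 := by
    rw [mul_pow, hk2]
  have hden : R₀ - r * Real.cos ϑ = (R₀ - r) * (1 + t ^ 2) / (1 + (k*t) ^ 2) := by
    rw [hcϑ']
    field_simp
    rw [hk2]
    field_simp
    ring
  have hdenpos : 0 < R₀ - r * Real.cos ϑ := by
    rw [hden]; positivity
  rw [hden, hcθ', hkt2]
  field_simp
  ring
end

section
/- Define G(r,θ,φ) = ((R₀ + r cos θ) sin φ, (R₀ + r cos θ) cos φ, r sin θ) (the map from toroidal to Cartesian coordinates) and F(r,θ,φ) = (B₀R₀(R₀ − √(R₀² − r²)), 2·arctan(√((R₀−r)/(R₀+r))·tan(θ/2)), φ) (the map from toroidal to adapted coordinates). Then for 0 < r < R₀, −π < θ < π, and all φ, |det DG(r,θ,φ)| = |det DF(r,θ,φ)|·(R₀ + r cos θ)²/(B₀R₀); that is, the volume factor √|g| in the adapted coordinates (ψ,ϑ,φ) equals R²/(B₀R₀) with R = R₀ + r cos θ. -/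
open Real

noncomputable def e3 : (ℝ × ℝ × ℝ) ≃ₗ[ℝ] (Fin 3 → ℝ) where
  toFun p := ![p.1, p.2.1, p.2.2]
  invFun v := (v 0, v 1, v 2)
  map_add' p q := by funext i; fin_cases i <;> simp
  map_smul' c p := by funext i; fin_cases i <;> simp
  left_inv p := rfl
  right_inv v := by funext i; fin_cases i <;> simp

lemma det3_s13 (L : (ℝ × ℝ × ℝ) →ₗ[ℝ] (ℝ × ℝ × ℝ)) :
    LinearMap.det L = Matrix.det
      !![(L (1,0,0)).1, (L (0,1,0)).1, (L (0,0,1)).1;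
         (L (1,0,0)).2.1, (L (0,1,0)).2.1, (L (0,0,1)).2.1;
         (L (1,0,0)).2.2, (L (0,1,0)).2.2, (L (0,0,1)).2.2] := by
  rw [← LinearMap.det_conj L e3, ← LinearMap.det_toMatrix']
  congr 1
  ext i j
  fin_cases i <;> fin_cases j <;>
    simp [LinearMap.toMatrix'_apply, e3, Matrix.cons_val_zero, Matrix.cons_val_one] <;> rfl

/-- With `G` the map from toroidal to Cartesian coordinates and `F`
the map from toroidal to adapted coordinates `(ψ,ϑ,φ)`, one has
`|det DG| = |det DF| · (R₀ + r cos θ)²/(B₀R₀)`; i.e. the volume factor `√|g|` in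
the adapted coordinates equals `R²/(B₀R₀)` with `R = R₀ + r cos θ`. -/
theorem volume_factor_adapted_coordinates
    (B₀ R₀ : ℝ) (hB₀ : 0 < B₀) (hR₀ : 0 < R₀)
    (G F : ℝ × ℝ × ℝ → ℝ × ℝ × ℝ)
    (hG : G = fun p =>
      ((R₀ + p.1 * Real.cos p.2.1) * Real.sin p.2.2,
       ((R₀ + p.1 * Real.cos p.2.1) * Real.cos p.2.2,
        p.1 * Real.sin p.2.1)))
    (hF : F = fun p =>
      (B₀ * R₀ * (R₀ - Real.sqrt (R₀ ^ 2 - p.1 ^ 2)),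
       (2 * Real.arctan (Real.sqrt ((R₀ - p.1) / (R₀ + p.1)) * Real.tan (p.2.1 / 2)),
        p.2.2)))
    (r θ φ : ℝ) (hr : 0 < r) (hrR : r < R₀) (hθ₁ : -π < θ) (hθ₂ : θ < π) :
    |LinearMap.det ((fderiv ℝ G (r, θ, φ)).toLinearMap)| =
      |LinearMap.det ((fderiv ℝ F (r, θ, φ)).toLinearMap)| *
        (R₀ + r * Real.cos θ) ^ 2 / (B₀ * R₀) := by
  subst hG; subst hF
  set p₀ : ℝ × ℝ × ℝ := (r, θ, φ) with hp₀
  -- coordinate projections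
  have hx : HasFDerivAt (𝕜 := ℝ) (fun p : ℝ × ℝ × ℝ => p.1)
      (ContinuousLinearMap.fst ℝ ℝ (ℝ × ℝ)) p₀ := hasFDerivAt_fst
  have hy : HasFDerivAt (𝕜 := ℝ) (fun p : ℝ × ℝ × ℝ => p.2.1)
      ((ContinuousLinearMap.fst ℝ ℝ ℝ).comp (ContinuousLinearMap.snd ℝ ℝ (ℝ × ℝ))) p₀ :=
    hasFDerivAt_fst.comp p₀ hasFDerivAt_snd
  have hz : HasFDerivAt (𝕜 := ℝ) (fun p : ℝ × ℝ × ℝ => p.2.2)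
      ((ContinuousLinearMap.snd ℝ ℝ ℝ).comp (ContinuousLinearMap.snd ℝ ℝ (ℝ × ℝ))) p₀ :=
    hasFDerivAt_snd.comp p₀ hasFDerivAt_snd
  -- derivative of G
  have hcosθ : HasFDerivAt (𝕜 := ℝ) (fun p : ℝ × ℝ × ℝ => Real.cos p.2.1) _ p₀ :=
    (Real.hasDerivAt_cos θ).comp_hasFDerivAt (f := fun p : ℝ × ℝ × ℝ => p.2.1) p₀ hy
  have hsinθ : HasFDerivAt (𝕜 := ℝ) (fun p : ℝ × ℝ × ℝ => Real.sin p.2.1) _ p₀ :=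
    (Real.hasDerivAt_sin θ).comp_hasFDerivAt (f := fun p : ℝ × ℝ × ℝ => p.2.1) p₀ hy
  have hcosφ : HasFDerivAt (𝕜 := ℝ) (fun p : ℝ × ℝ × ℝ => Real.cos p.2.2) _ p₀ :=
    (Real.hasDerivAt_cos φ).comp_hasFDerivAt (f := fun p : ℝ × ℝ × ℝ => p.2.2) p₀ hz
  have hsinφ : HasFDerivAt (𝕜 := ℝ) (fun p : ℝ × ℝ × ℝ => Real.sin p.2.2) _ p₀ :=
    (Real.hasDerivAt_sin φ).comp_hasFDerivAt (f := fun p : ℝ × ℝ × ℝ => p.2.2) p₀ hz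
  have hinner : HasFDerivAt (𝕜 := ℝ) (fun p : ℝ × ℝ × ℝ => R₀ + p.1 * Real.cos p.2.1) _ p₀ :=
    (hx.mul hcosθ).const_add R₀
  have hg1 := hinner.fun_mul hsinφ
  have hg2 := hinner.fun_mul hcosφ
  have hg3 := hx.fun_mul hsinθ
  have hGd := hg1.prodMk (hg2.prodMk hg3)
  -- derivative of F
  have hρ : 0 < R₀ + r * Real.cos θ := by nlinarith [Real.neg_one_le_cos θ, Real.cos_le_one θ]
  have hRr : 0 < R₀ - r := by linarith
  have hRr' : 0 < R₀ + r := by linarith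
  have hsq : 0 < R₀ ^ 2 - r ^ 2 := by nlinarith
  have hqpos : 0 < (R₀ - r) / (R₀ + r) := div_pos hRr hRr'
  have hcoshalf : 0 < Real.cos (θ / 2) := by
    apply Real.cos_pos_of_mem_Ioo; constructor <;> [linarith; linarith]
  have hu : HasFDerivAt (𝕜 := ℝ) (fun p : ℝ × ℝ × ℝ => R₀ ^ 2 - p.1 ^ 2) _ p₀ :=
    ((hasDerivAt_pow 2 r).comp_hasFDerivAt (f := fun p : ℝ × ℝ × ℝ => p.1) p₀ hx).const_sub (R₀ ^ 2)
  have hsqrtu : HasFDerivAt (𝕜 := ℝ) (fun p : ℝ × ℝ × ℝ => Real.sqrt (R₀ ^ 2 - p.1 ^ 2)) _ p₀ :=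
    (Real.hasDerivAt_sqrt hsq.ne').comp_hasFDerivAt (f := fun p : ℝ × ℝ × ℝ => R₀ ^ 2 - p.1 ^ 2) p₀ hu
  have hf1 := (hsqrtu.const_sub R₀).const_mul (B₀ * R₀)
  have hq1 : HasDerivAt (fun x : ℝ => (R₀ - x) / (R₀ + x)) _ r :=
    ((hasDerivAt_id r).const_sub R₀).div ((hasDerivAt_id r).const_add R₀) hRr'.ne'
  have hk1 : HasDerivAt (fun x : ℝ => Real.sqrt ((R₀ - x) / (R₀ + x))) _ r :=
    (Real.hasDerivAt_sqrt hqpos.ne').comp r hq1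
  have hk : HasFDerivAt (𝕜 := ℝ) (fun p : ℝ × ℝ × ℝ => Real.sqrt ((R₀ - p.1) / (R₀ + p.1))) _ p₀ :=
    hk1.comp_hasFDerivAt (f := fun p : ℝ × ℝ × ℝ => p.1) p₀ hx
  have hhalf : HasFDerivAt (𝕜 := ℝ) (fun p : ℝ × ℝ × ℝ => p.2.1 / 2)
      ((2:ℝ)⁻¹ • (ContinuousLinearMap.fst ℝ ℝ ℝ).comp (ContinuousLinearMap.snd ℝ ℝ (ℝ × ℝ))) p₀ := by
    have := hy.const_smul (R := ℝ) (2⁻¹ : ℝ)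
    simpa [div_eq_mul_inv] using hy.mul_const (2⁻¹ : ℝ)
  have htan : HasFDerivAt (𝕜 := ℝ) (fun p : ℝ × ℝ × ℝ => Real.tan (p.2.1 / 2)) _ p₀ :=
    (Real.hasDerivAt_tan hcoshalf.ne').comp_hasFDerivAt (f := fun p : ℝ × ℝ × ℝ => p.2.1 / 2) p₀ hhalf
  have hginner := hk.mul htan
  have harctan : HasFDerivAt
      (fun p : ℝ × ℝ × ℝ =>
        Real.arctan (Real.sqrt ((R₀ - p.1) / (R₀ + p.1)) * Real.tan (p.2.1 / 2))) _ p₀ :=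
    (Real.hasDerivAt_arctan (Real.sqrt ((R₀ - r) / (R₀ + r)) * Real.tan (θ / 2))).comp_hasFDerivAt
      (f := fun p : ℝ × ℝ × ℝ => Real.sqrt ((R₀ - p.1) / (R₀ + p.1)) * Real.tan (p.2.1 / 2)) p₀ hginner
  have hf2 := harctan.const_mul 2
  have hFd := hf1.prodMk (hf2.prodMk hz)
  rw [hGd.fderiv, hFd.fderiv, det3_s13, det3_s13]
  simp only [ContinuousLinearMap.coe_coe, ContinuousLinearMap.prod_apply,
    ContinuousLinearMap.add_apply, ContinuousLinearMap.coe_smul', Pi.smul_apply,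
    ContinuousLinearMap.smul_apply, ContinuousLinearMap.comp_apply,
    ContinuousLinearMap.coe_fst', ContinuousLinearMap.coe_snd',
    smul_eq_mul, Matrix.det_fin_three, Matrix.cons_val', Matrix.cons_val_zero,
    Matrix.cons_val_one, Matrix.head_cons, Matrix.empty_val', Matrix.cons_val_fin_one,
    Matrix.head_fin_const, Matrix.cons_val_two, Matrix.tail_cons, Matrix.cons_val]
  simp [Matrix.vecHead, Matrix.vecTail, hp₀, -abs_mul, -abs_inv, -abs_div]
  norm_num [-abs_mul, -abs_inv, -abs_div]
  have hpy : Real.sin (θ/2)^2 + Real.cos (θ/2)^2 = 1 := Real.sin_sq_add_cos_sq _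
  have hcs : Real.cos θ = Real.cos (θ/2)^2 - Real.sin (θ/2)^2 := by
    have h1 := Real.cos_sq (θ/2); have h2 := Real.sin_sq (θ/2)
    rw [h2, h1]; ring_nf
  have hs0 : 0 < Real.sqrt (R₀ - r) := Real.sqrt_pos.2 hRr
  have ht0 : 0 < Real.sqrt (R₀ + r) := Real.sqrt_pos.2 hRr'
  have hs2 : Real.sqrt (R₀ - r) ^ 2 = R₀ - r := Real.sq_sqrt hRr.le
  have ht2 : Real.sqrt (R₀ + r) ^ 2 = R₀ + r := Real.sq_sqrt hRr'.le
  have hst : Real.sqrt (R₀ ^ 2 - r ^ 2) = Real.sqrt (R₀ - r) * Real.sqrt (R₀ + r) := by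
    rw [show R₀ ^ 2 - r ^ 2 = (R₀ - r) * (R₀ + r) by ring, Real.sqrt_mul hRr.le]
  have hkk : Real.sqrt ((R₀ - r) / (R₀ + r)) = Real.sqrt (R₀ - r) / Real.sqrt (R₀ + r) :=
    Real.sqrt_div hRr.le _
  have hL : Real.sin φ * Real.cos θ * ((R₀ + r * Real.cos θ) * Real.sin φ) * (r * Real.cos θ) +
            Real.sin φ * (r * Real.sin θ) * ((R₀ + r * Real.cos θ) * Real.sin φ) * Real.sin θ +
          (R₀ + r * Real.cos θ) * Real.cos φ * (Real.cos φ * Real.cos θ) * (r * Real.cos θ) +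
        (R₀ + r * Real.cos θ) * Real.cos φ * (Real.cos φ * (r * Real.sin θ)) * Real.sin θ
        = r * (R₀ + r * Real.cos θ) := by
    have h1 := Real.sin_sq_add_cos_sq θ
    have h2 := Real.sin_sq_add_cos_sq φ
    linear_combination ((R₀ + r * Real.cos θ) * r * (Real.sin φ ^ 2 + Real.cos φ ^ 2)) * h1 +
      ((R₀ + r * Real.cos θ) * r) * h2
  have key : B₀ * R₀ * ((Real.sqrt (R₀ ^ 2 - r ^ 2))⁻¹ * (1 / 2) * (2 * r)) *
            (2 * ((1 + (Real.sqrt ((R₀ - r) / (R₀ + r)) * Real.tan (θ / 2)) ^ 2)⁻¹ *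
                (Real.sqrt ((R₀ - r) / (R₀ + r)) * ((Real.cos (θ / 2) ^ 2)⁻¹ * (1 / 2)))))
      = B₀ * R₀ * r / (R₀ + r * Real.cos θ) := by
    rw [hst, hkk, Real.tan_eq_sin_div_cos]
    have hden : (1 + (Real.sqrt (R₀ - r) / Real.sqrt (R₀ + r) *
        (Real.sin (θ/2) / Real.cos (θ/2))) ^ 2)
        = (R₀ + r * Real.cos θ) / ((R₀ + r) * Real.cos (θ/2) ^ 2) := by
      rw [hcs]
      field_simp
      rw [ht2, hs2, show Real.sin (θ/2) ^ 2 = 1 - Real.cos (θ/2) ^ 2 by linarith]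
      ring
    rw [hden]
    field_simp
    rw [ht2]
  rw [hL, key]
  rw [abs_of_pos (mul_pos hr hρ), abs_of_pos (by positivity)]
  field_simp
end

section
/- For all ψ > 0 and all ϑ, φ, the field V is divergence-free in the adapted coordinates: ∂_ψ V^ψ(ψ,ϑ,φ) + ∂_ϑ V^ϑ(ψ,ϑ,φ) + ∂_φ V^φ(ψ,ϑ,φ) = 0. -/
open Real

/-- The `ψ`-component of the auxiliary field `V`. -/
noncomputable def Vpsi (F : Finset (ℤ × ℤ)) (ε ζ : ℤ × ℤ → ℝ) (f : ℤ × ℤ → ℝ → ℝ)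
    (ψ ϑ φ : ℝ) : ℝ :=
  ∑ p ∈ F, (p.1 : ℝ) * ε p * ψ ^ ((p.1 : ℝ) / 2) * f p ψ *
    Real.sin ((p.1 : ℝ) * ϑ - (p.2 : ℝ) * φ + ζ p)

/-- The `ϑ`-component of the auxiliary field `V`. -/
noncomputable def Vtheta (w₁ w₂ : ℝ) (F : Finset (ℤ × ℤ)) (ε ζ : ℤ × ℤ → ℝ)
    (f : ℤ × ℤ → ℝ → ℝ) (ψ ϑ φ : ℝ) : ℝ :=
  w₁ + 2 * w₂ * ψ + ∑ p ∈ F, ε p * ψ ^ ((p.1 : ℝ) / 2 - 1) *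
    (((p.1 : ℝ) / 2) * f p ψ + ψ * deriv (f p) ψ) *
    Real.cos ((p.1 : ℝ) * ϑ - (p.2 : ℝ) * φ + ζ p)

/-- The `φ`-component of the auxiliary field `V`. -/
def Vphi (ψ ϑ φ : ℝ) : ℝ := 1

/-- For all `ψ > 0` and all `ϑ, φ`, the field `V` is divergence-free
in the adapted coordinates:
`∂_ψ V^ψ + ∂_ϑ V^ϑ + ∂_φ V^φ = 0`. -/
theorem V_divergence_free
    (w₁ w₂ : ℝ) (F : Finset (ℤ × ℤ)) (ε ζ : ℤ × ℤ → ℝ) (f : ℤ × ℤ → ℝ → ℝ)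
    (hm : ∀ p ∈ F, 2 ≤ p.1)
    (hf : ∀ p ∈ F, ContDiff ℝ 1 (f p)) :
    ∀ ψ ϑ φ : ℝ, 0 < ψ →
      deriv (fun s => Vpsi F ε ζ f s ϑ φ) ψ +
        deriv (fun s => Vtheta w₁ w₂ F ε ζ f ψ s φ) ϑ +
        deriv (fun s => Vphi ψ ϑ s) φ = 0 := by
  intro ψ ϑ φ hψ
  have hψ0 : ψ ≠ 0 := ne_of_gt hψ
  have h3 : deriv (fun s => Vphi ψ ϑ s) φ = 0 := by simp [Vphi]
  have h1 : HasDerivAt (fun s => Vpsi F ε ζ f s ϑ φ)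
      (∑ p ∈ F, (p.1 : ℝ) * ε p *
        (((p.1 : ℝ) / 2) * ψ ^ ((p.1 : ℝ) / 2 - 1) * f p ψ
          + ψ ^ ((p.1 : ℝ) / 2) * deriv (f p) ψ) *
        Real.sin ((p.1 : ℝ) * ϑ - (p.2 : ℝ) * φ + ζ p)) ψ := by
    unfold Vpsi
    apply HasDerivAt.fun_sum
    intro p hp
    have hfp : HasDerivAt (f p) (deriv (f p) ψ) ψ :=
      (((hf p hp).differentiable one_ne_zero) ψ).hasDerivAt
    have hpow : HasDerivAt (fun s : ℝ => s ^ ((p.1 : ℝ) / 2))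
        (((p.1 : ℝ) / 2) * ψ ^ ((p.1 : ℝ) / 2 - 1)) ψ :=
      Real.hasDerivAt_rpow_const (Or.inl hψ0)
    have h := (((hpow.const_mul ((p.1 : ℝ) * ε p)).mul hfp).mul_const
      (Real.sin ((p.1 : ℝ) * ϑ - (p.2 : ℝ) * φ + ζ p)))
    exact h.congr_deriv (by ring)
  have h2 : HasDerivAt (fun s => Vtheta w₁ w₂ F ε ζ f ψ s φ)
      (∑ p ∈ F, ε p * ψ ^ ((p.1 : ℝ) / 2 - 1) *
        (((p.1 : ℝ) / 2) * f p ψ + ψ * deriv (f p) ψ) *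
        (-Real.sin ((p.1 : ℝ) * ϑ - (p.2 : ℝ) * φ + ζ p) * (p.1 : ℝ))) ϑ := by
    unfold Vtheta
    have : HasDerivAt (fun s : ℝ => ∑ p ∈ F, ε p * ψ ^ ((p.1 : ℝ) / 2 - 1) *
        (((p.1 : ℝ) / 2) * f p ψ + ψ * deriv (f p) ψ) *
        Real.cos ((p.1 : ℝ) * s - (p.2 : ℝ) * φ + ζ p))
        (∑ p ∈ F, ε p * ψ ^ ((p.1 : ℝ) / 2 - 1) *
        (((p.1 : ℝ) / 2) * f p ψ + ψ * deriv (f p) ψ) *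
        (-Real.sin ((p.1 : ℝ) * ϑ - (p.2 : ℝ) * φ + ζ p) * (p.1 : ℝ))) ϑ := by
      apply HasDerivAt.fun_sum
      intro p hp
      have hin : HasDerivAt (fun s : ℝ => (p.1 : ℝ) * s - (p.2 : ℝ) * φ + ζ p)
          ((p.1 : ℝ) * 1) ϑ :=
        (((hasDerivAt_id ϑ).const_mul ((p.1 : ℝ))).sub_const ((p.2 : ℝ) * φ)).add_const (ζ p)
      have hcos := (Real.hasDerivAt_cos ((p.1 : ℝ) * ϑ - (p.2 : ℝ) * φ + ζ p)).comp ϑ hin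
      have h := hcos.const_mul (ε p * ψ ^ ((p.1 : ℝ) / 2 - 1) *
        (((p.1 : ℝ) / 2) * f p ψ + ψ * deriv (f p) ψ))
      exact h.congr_deriv (by ring)
    exact ((hasDerivAt_const ϑ (w₁ + 2 * w₂ * ψ)).add this).congr_deriv (by simp)
  rw [h1.deriv, h2.deriv, h3, add_zero, ← Finset.sum_add_distrib]
  apply Finset.sum_eq_zero
  intro p hp
  have key : ψ ^ ((p.1 : ℝ) / 2) = ψ ^ ((p.1 : ℝ) / 2 - 1) * ψ := by
    rw [Real.rpow_sub_one hψ0]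
    field_simp
  rw [key]
  ring
end

section
/- Let a ≤ 0 ≤ b, let ϑ, φ : [a,b] → ℝ be continuous, and let ψ : [a,b] → [0,∞) be continuously differentiable with ψ'(t) = V^ψ(ψ(t), ϑ(t), φ(t)) for all t ∈ [a,b]. If ψ(0) = 0, then ψ(t) = 0 for all t ∈ [a,b]; that is, the circle ψ = 0 (the magnetic axis) is invariant under the field-line flow. -/
open Real

/-- For `0 ≤ x ≤ M` and exponent `e ≥ 1`, `x ^ e ≤ (max M 1) ^ (e - 1) * x`. -/
lemma rpow_le_linear {x M e : ℝ} (hx : 0 ≤ x) (hxM : x ≤ M) (he : 1 ≤ e) :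
    x ^ e ≤ (max M 1) ^ (e - 1) * x := by
  rcases eq_or_lt_of_le hx with h0 | h0
  · rw [← h0, Real.zero_rpow (by linarith), mul_zero]
  · have h1 : x ^ e = x ^ (e - 1) * x := by
      rw [← Real.rpow_add_one h0.ne' (e - 1), sub_add_cancel]
    rw [h1]
    have h2 : x ^ (e - 1) ≤ (max M 1) ^ (e - 1) :=
      Real.rpow_le_rpow hx (hxM.trans (le_max_left _ _)) (by linarith)
    exact mul_le_mul_of_nonneg_right h2 hx

/-- The magnetic axis `ψ = 0` is invariant under the field-line flow:
if `ψ` solves `ψ' = V^ψ(ψ, ϑ, φ)` on `[a,b] ∋ 0` with values in `[0,∞)` and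
`ψ(0) = 0`, then `ψ ≡ 0` on `[a,b]`. -/
theorem magnetic_axis_invariant
    (F : Finset (ℤ × ℤ)) (ε ζ : ℤ × ℤ → ℝ) (f : ℤ × ℤ → ℝ → ℝ)
    (hm : ∀ p ∈ F, 2 ≤ p.1)
    (hf : ∀ p ∈ F, Continuous (f p))
    (a b : ℝ) (ha : a ≤ 0) (hb : 0 ≤ b)
    (ϑ φ : ℝ → ℝ)
    (hϑ : ContinuousOn ϑ (Set.Icc a b)) (hφ : ContinuousOn φ (Set.Icc a b))
    (ψ : ℝ → ℝ)
    (hψ0 : ∀ t ∈ Set.Icc a b, 0 ≤ ψ t)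
    (hψ : ∀ t ∈ Set.Icc a b,
      HasDerivWithinAt ψ (Vpsi F ε ζ f (ψ t) (ϑ t) (φ t)) (Set.Icc a b) t)
    (hinit : ψ 0 = 0) :
    ∀ t ∈ Set.Icc a b, ψ t = 0 := by
  have h0mem : (0 : ℝ) ∈ Set.Icc a b := ⟨ha, hb⟩
  have hψc : ContinuousOn ψ (Set.Icc a b) := fun t ht => (hψ t ht).continuousWithinAt
  -- bound on ψ
  obtain ⟨M, hM⟩ := (isCompact_Icc).exists_bound_of_continuousOn hψc
  have hM0 : 0 ≤ M := by have := hM 0 h0mem; rw [hinit] at this; simpa using this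
  have hψM : ∀ t ∈ Set.Icc a b, ψ t ≤ M := fun t ht => (le_abs_self _).trans (hM t ht)
  -- bounds on f p on [0, M]
  have hCex : ∀ p ∈ F, ∃ C : ℝ, 0 ≤ C ∧ ∀ x ∈ Set.Icc (0:ℝ) M, |f p x| ≤ C := by
    intro p hp
    obtain ⟨C, hC⟩ := (isCompact_Icc).exists_bound_of_continuousOn (hf p hp).continuousOn
    refine ⟨C, ?_, fun x hx => hC x hx⟩
    exact (abs_nonneg _).trans (hC 0 ⟨le_rfl, hM0⟩)
  choose! C hC0 hCle using hCex
  set K : ℝ := ∑ p ∈ F, |(p.1 : ℝ) * ε p| * (max M 1) ^ (((p.1 : ℝ)) / 2 - 1) * C p with hK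
  -- key linear bound
  have key : ∀ x : ℝ, 0 ≤ x → x ≤ M → ∀ θ φv : ℝ, |Vpsi F ε ζ f x θ φv| ≤ K * x := by
    intro x hx hxM θ φv
    rw [Vpsi, hK, Finset.sum_mul]
    refine (Finset.abs_sum_le_sum_abs _ _).trans (Finset.sum_le_sum ?_)
    intro p hp
    have he : (1:ℝ) ≤ (p.1 : ℝ) / 2 := by
      have := hm p hp
      have : (2:ℝ) ≤ (p.1 : ℝ) := by exact_mod_cast this
      linarith
    have hrpow : x ^ ((p.1 : ℝ) / 2) ≤ (max M 1) ^ ((p.1 : ℝ) / 2 - 1) * x :=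
      rpow_le_linear hx hxM he
    have hrpow0 : (0:ℝ) ≤ x ^ ((p.1 : ℝ) / 2) := Real.rpow_nonneg hx _
    have hmax : (0:ℝ) ≤ (max M 1) ^ ((p.1 : ℝ) / 2 - 1) :=
      Real.rpow_nonneg (le_trans zero_le_one (le_max_right _ _)) _
    have hfb : |f p x| ≤ C p := hCle p hp x ⟨hx, hxM⟩
    have hsin : |Real.sin ((p.1 : ℝ) * θ - (p.2 : ℝ) * φv + ζ p)| ≤ 1 :=
      Real.abs_sin_le_one _
    calc |(p.1 : ℝ) * ε p * x ^ ((p.1 : ℝ) / 2) * f p x *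
          Real.sin ((p.1 : ℝ) * θ - (p.2 : ℝ) * φv + ζ p)|
        = |(p.1 : ℝ) * ε p| * x ^ ((p.1 : ℝ) / 2) * |f p x| *
          |Real.sin ((p.1 : ℝ) * θ - (p.2 : ℝ) * φv + ζ p)| := by
          rw [abs_mul, abs_mul, abs_mul, abs_of_nonneg hrpow0]
      _ ≤ |(p.1 : ℝ) * ε p| * ((max M 1) ^ ((p.1 : ℝ) / 2 - 1) * x) * C p * 1 := by
          have hb0 : (0:ℝ) ≤ |(p.1 : ℝ) * ε p| * ((max M 1) ^ ((p.1 : ℝ) / 2 - 1) * x) * C p :=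
            mul_nonneg (mul_nonneg (abs_nonneg _) (mul_nonneg hmax hx)) (hC0 p hp)
          gcongr <;> first
            | exact hb0 | exact hrpow | exact hfb | exact hsin | positivity
      _ = |(p.1 : ℝ) * ε p| * (max M 1) ^ ((p.1 : ℝ) / 2 - 1) * C p * x := by ring
  -- derivative within Ici, for any subinterval containing t
  have hderiv : ∀ t ∈ Set.Ico a b,
      HasDerivWithinAt ψ (Vpsi F ε ζ f (ψ t) (ϑ t) (φ t)) (Set.Ici t) t := by
    intro t ht
    have h1 : HasDerivWithinAt ψ (Vpsi F ε ζ f (ψ t) (ϑ t) (φ t)) (Set.Icc t b) t :=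
      (hψ t ⟨ht.1, ht.2.le⟩).mono (Set.Icc_subset_Icc_left ht.1)
    exact h1.mono_of_mem_nhdsWithin (Icc_mem_nhdsGE ht.2)
  -- forward direction on [0, b]
  have fwd : ∀ t ∈ Set.Icc (0:ℝ) b, ψ t = 0 := by
    intro t ht
    have sub : Set.Icc (0:ℝ) b ⊆ Set.Icc a b := Set.Icc_subset_Icc_left ha
    have := norm_le_gronwallBound_of_norm_deriv_right_le (δ := 0) (K := K) (ε := 0)
      (f := ψ) (f' := fun t => Vpsi F ε ζ f (ψ t) (ϑ t) (φ t)) (a := 0) (b := b)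
      (hψc.mono sub)
      (fun x hx => hderiv x ⟨ha.trans hx.1, hx.2⟩)
      (by simp [hinit])
      (fun x hx => by
        have hxm : x ∈ Set.Icc a b := sub ⟨hx.1, hx.2.le⟩
        have := key (ψ x) (hψ0 x hxm) (hψM x hxm) (ϑ x) (φ x)
        rw [Real.norm_eq_abs, Real.norm_eq_abs, abs_of_nonneg (hψ0 x hxm)]
        linarith)
    have h := this t ht
    rw [gronwallBound_ε0_δ0, Real.norm_eq_abs] at h
    have := hψ0 t (sub ht)
    have := abs_nonneg (ψ t)
    rw [abs_of_nonneg (hψ0 t (sub ht))] at h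
    linarith
  -- backward direction on [a, 0] via reflection
  have bwd : ∀ t ∈ Set.Icc a 0, ψ t = 0 := by
    intro t ht
    set g : ℝ → ℝ := fun s => ψ (-s) with hg
    have hnegmem : ∀ s ∈ Set.Icc (0:ℝ) (-a), -s ∈ Set.Icc a b := by
      intro s hs
      constructor <;> [linarith [hs.2]; linarith [hs.1]]
    have hgc : ContinuousOn g (Set.Icc 0 (-a)) := by
      apply hψc.comp (continuous_neg.continuousOn) hnegmem
    have hgderiv : ∀ s ∈ Set.Ico (0:ℝ) (-a),
        HasDerivWithinAt g (-(Vpsi F ε ζ f (ψ (-s)) (ϑ (-s)) (φ (-s)))) (Set.Ici s) s := by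
      intro s hs
      have hsm : -s ∈ Set.Icc a b := hnegmem s ⟨hs.1, hs.2.le⟩
      have hneg : HasDerivWithinAt (fun x : ℝ => -x) (-1) (Set.Icc s (-a)) s :=
        (hasDerivAt_neg s).hasDerivWithinAt
      have hmaps : Set.MapsTo (fun x : ℝ => -x) (Set.Icc s (-a)) (Set.Icc a b) := by
        intro x hx
        have : a ≤ -x ∧ -x ≤ b := ⟨by linarith [hx.2], by linarith [hx.1, hs.1]⟩
        exact this
      have hcomp := (hψ (-s) hsm).comp s hneg hmaps
      have h2 : HasDerivWithinAt g (-(Vpsi F ε ζ f (ψ (-s)) (ϑ (-s)) (φ (-s))))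
          (Set.Icc s (-a)) s := by
        exact hcomp.congr_deriv (by ring)
      exact h2.mono_of_mem_nhdsWithin (Icc_mem_nhdsGE hs.2)
    have := norm_le_gronwallBound_of_norm_deriv_right_le (δ := 0) (K := K) (ε := 0)
      (f := g) (f' := fun s => -(Vpsi F ε ζ f (ψ (-s)) (ϑ (-s)) (φ (-s)))) (a := 0) (b := -a)
      hgc hgderiv
      (by simp [hg, hinit])
      (fun x hx => by
        have hxm : -x ∈ Set.Icc a b := hnegmem x ⟨hx.1, hx.2.le⟩
        have := key (ψ (-x)) (hψ0 _ hxm) (hψM _ hxm) (ϑ (-x)) (φ (-x))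
        rw [Real.norm_eq_abs, Real.norm_eq_abs, abs_neg, hg]
        simp only
        rw [abs_of_nonneg (hψ0 _ hxm)]
        linarith)
    have h := this (-t) ⟨by linarith [ht.2], by linarith [ht.1]⟩
    rw [gronwallBound_ε0_δ0, Real.norm_eq_abs] at h
    have htm : t ∈ Set.Icc a b := ⟨ht.1, ht.2.trans hb⟩
    have hgt : g (-t) = ψ t := by simp [hg]
    rw [hgt, abs_of_nonneg (hψ0 t htm)] at h
    linarith [hψ0 t htm]
  intro t ht
  rcases le_or_gt t 0 with h | h
  · exact bwd t ⟨ht.1, h⟩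
  · exact fwd t ⟨h.le, ht.2⟩
end
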